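/- arXiv:1403.6582 — 18 statements merged into one kernel-verified Lean document; each statement's English description precedes it below -/
import Mathlib

section
/- Let G be a proper subdomain of ℝⁿ (n ≥ 1). Then for all x, y ∈ G, s_G(x,y) ≤ (1/log 3) · j_G(x,y). -/
open Metric Set

/-- The triangular ratio metric `s_G(x,y) = sup_{z ∈ ∂G} |x-y|/(|x-z|+|z-y|)`. -/
noncomputable def triangularRatio {n : ℕ} (G : Set (EuclideanSpace ℝ (Fin n)))
    (x y : EuclideanSpace ℝ (Fin n)) : ℝ :=
  ⨆ z : frontier G, dist x y / (dist x z.1 + dist z.1 y)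

/-- Distance to the boundary `d_G(x) = dist(x, ∂G)`. -/
noncomputable def distBd {n : ℕ} (G : Set (EuclideanSpace ℝ (Fin n)))
    (x : EuclideanSpace ℝ (Fin n)) : ℝ :=
  Metric.infDist x (frontier G)

/-- The distance ratio metric `j_G(x,y) = log(1 + |x-y|/min{d_G(x), d_G(y)})`. -/
noncomputable def distRatio {n : ℕ} (G : Set (EuclideanSpace ℝ (Fin n)))
    (x y : EuclideanSpace ℝ (Fin n)) : ℝ :=
  Real.log (1 + dist x y / min (distBd G x) (distBd G y))

lemma chord_log (u : ℝ) (h0 : 0 ≤ u) (h2 : u ≤ 2) :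
    u / 2 * Real.log 3 ≤ Real.log (1 + u) := by
  have hc := (strictConcaveOn_log_Ioi.concaveOn).2
    (show (1:ℝ) ∈ Ioi 0 by norm_num) (show (3:ℝ) ∈ Ioi 0 by norm_num)
    (show (0:ℝ) ≤ 1 - u / 2 by linarith) (show (0:ℝ) ≤ u / 2 by linarith)
    (by ring)
  have h1 : (1 - u / 2) • (1:ℝ) + (u / 2) • (3:ℝ) = 1 + u := by
    simp [smul_eq_mul]; ring
  rw [h1] at hc
  simpa [Real.log_one, smul_eq_mul] using hc

lemma key_scalar (t d : ℝ) (ht : 0 ≤ t) (hd : 0 < d) :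
    t / max t (2 * d) ≤ (1 / Real.log 3) * Real.log (1 + t / d) := by
  have hlog3 : 0 < Real.log 3 := Real.log_pos (by norm_num)
  have hu : 0 ≤ t / d := div_nonneg ht hd.le
  rw [one_div, inv_mul_eq_div]
  rcases le_total t (2 * d) with h | h
  · rw [max_eq_right h]
    have hch := chord_log (t / d) hu (by rw [div_le_iff₀ hd]; linarith)
    have he : t / (2 * d) = (t / d) / 2 := by
      rw [div_div, mul_comm]
    rw [he, div_le_div_iff₀ two_pos hlog3]
    nlinarith
  · rw [max_eq_left h]
    have htpos : 0 < t := lt_of_lt_of_le (by linarith) h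
    have h2u : (2:ℝ) ≤ t / d := (le_div_iff₀ hd).2 (by linarith)
    have hlog : Real.log 3 ≤ Real.log (1 + t / d) :=
      Real.log_le_log (by norm_num) (by linarith)
    rw [div_self htpos.ne', le_div_iff₀ hlog3, one_mul]
    exact hlog

/-- For a proper subdomain `G ⊊ ℝⁿ` (n ≥ 1) and all `x, y ∈ G`,
`s_G(x,y) ≤ (1/log 3) · j_G(x,y)`. -/
theorem sG_le_inv_log_three_mul_jG {n : ℕ}
    (G : Set (EuclideanSpace ℝ (Fin (n + 1))))
    (hGopen : IsOpen G) (hGconn : IsConnected G) (hGproper : G ≠ univ)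
    (x y : EuclideanSpace ℝ (Fin (n + 1))) (hx : x ∈ G) (hy : y ∈ G) :
    triangularRatio G x y ≤ (1 / Real.log 3) * distRatio G x y := by
  have hne : (frontier G).Nonempty :=
    nonempty_frontier_iff.2 ⟨⟨x, hx⟩, hGproper⟩
  have hfr : IsClosed (frontier G) := isClosed_frontier
  have hxf : x ∉ frontier G := fun h => (hGopen.frontier_eq ▸ h).2 hx
  have hyf : y ∉ frontier G := fun h => (hGopen.frontier_eq ▸ h).2 hy
  have hdx : 0 < distBd G x := (hfr.notMem_iff_infDist_pos hne).1 hxf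
  have hdy : 0 < distBd G y := (hfr.notMem_iff_infDist_pos hne).1 hyf
  set d := min (distBd G x) (distBd G y) with hdd
  have hd : 0 < d := lt_min hdx hdy
  set t := dist x y with htd
  have ht : 0 ≤ t := dist_nonneg
  have : Nonempty (frontier G) := hne.to_subtype
  unfold triangularRatio
  apply ciSup_le
  intro z
  have h1 : t ≤ dist x z.1 + dist z.1 y := dist_triangle x z.1 y
  have h2 : distBd G x ≤ dist x z.1 := infDist_le_dist_of_mem z.2
  have h3 : distBd G y ≤ dist z.1 y := by
    rw [dist_comm]; exact infDist_le_dist_of_mem z.2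
  have hM : max t (2 * d) ≤ dist x z.1 + dist z.1 y := by
    apply max_le h1
    have := min_le_left (distBd G x) (distBd G y)
    have := min_le_right (distBd G x) (distBd G y)
    linarith
  have hMpos : 0 < max t (2 * d) := lt_of_lt_of_le (by linarith) (le_max_right _ _)
  calc t / (dist x z.1 + dist z.1 y) ≤ t / max t (2 * d) :=
        div_le_div_of_nonneg_left ht hMpos hM
    _ ≤ (1 / Real.log 3) * Real.log (1 + t / d) := key_scalar t d ht hd
    _ = (1 / Real.log 3) * distRatio G x y := rfl
end

section
/- Let G = ℝⁿ \ {0} (n ≥ 1). Then for every x ∈ G, taking y = −x, one has s_G(x,y) = 1 and j_G(x,y) = log 3. Consequently the constant 1/log 3 in the inequality s_G ≤ (1/log 3)·j_G is best possible. -/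
open Metric Set

/-- The quantity `p_G(x,y) = |x-y| / √(|x-y|² + 4 d_G(x) d_G(y))`. -/
noncomputable def pMetric {n : ℕ} (G : Set (EuclideanSpace ℝ (Fin n)))
    (x y : EuclideanSpace ℝ (Fin n)) : ℝ :=
  dist x y / Real.sqrt (dist x y ^ 2 + 4 * distBd G x * distBd G y)

/-- For `G = ℝⁿ \ {0}` (n ≥ 1) and any `x ∈ G`, taking `y = -x` one has
`s_G(x,y) = 1` and `j_G(x,y) = log 3`, so the constant `1/log 3` in
`s_G ≤ (1/log 3)·j_G` is best possible. -/
theorem sG_eq_one_and_jG_eq_log_three_of_punctured {n : ℕ}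
    (x : EuclideanSpace ℝ (Fin (n + 1))) (hx : x ≠ 0) :
    triangularRatio ({0}ᶜ : Set (EuclideanSpace ℝ (Fin (n + 1)))) x (-x) = 1 ∧
      distRatio ({0}ᶜ : Set (EuclideanSpace ℝ (Fin (n + 1)))) x (-x) = Real.log 3 := by
  have hfr : frontier ({0}ᶜ : Set (EuclideanSpace ℝ (Fin (n + 1)))) = {0} := by
    rw [frontier_compl, frontier, interior_singleton, closure_singleton, diff_empty]
  have hnx : ‖x‖ ≠ 0 := norm_ne_zero_iff.mpr hx
  have hd : dist x (-x) = 2 * ‖x‖ := by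
    rw [dist_eq_norm, sub_neg_eq_add, ← two_smul ℝ x, norm_smul]
    simp [Real.norm_ofNat]
  constructor
  · rw [triangularRatio, hfr]
    have : ∀ z : ({0} : Set (EuclideanSpace ℝ (Fin (n + 1)))),
        dist x (-x) / (dist x z.1 + dist z.1 (-x)) = 1 := by
      rintro ⟨z, hz⟩
      simp only [mem_singleton_iff] at hz
      subst hz
      rw [dist_zero_left, dist_zero_right, norm_neg, hd]
      field_simp
      ring
    rw [funext this]
    exact ciSup_const
  · rw [distRatio, distBd, distBd, hfr, infDist_singleton, infDist_singleton,
      dist_zero_right, dist_zero_right, norm_neg, min_self, hd]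
    rw [mul_div_assoc, div_self hnx, mul_one]
    norm_num
end

section
/- Let G be a proper subdomain of ℝⁿ. Then for all x, y ∈ G, p_G(x,y) ≤ (1/√2) · j_G(x,y). -/
open Metric Set

/-! Replacing `d_G(x) d_G(y)` by `d² = min{d_G(x), d_G(y)}²` only increases `p_G`, and with
`u = |x-y|/d` one has `√(u² + 4) ≥ (u + 2)/√2` and the Padé bound `log (1 + u) ≥ 2u/(u + 2)`,
so `p_G ≤ u/√(u² + 4) ≤ (1/√2) · 2u/(u + 2) ≤ (1/√2) · j_G`. -/

theorem infDist_frontier_pos_of_isOpen {X : Type*} [MetricSpace X] [PreconnectedSpace X]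
    {G : Set X} (hG : IsOpen G) (hG_ne_univ : G ≠ univ) {x : X} (hx : x ∈ G) :
    0 < infDist x (frontier G) := by
  have hfrontier : (frontier G).Nonempty := nonempty_frontier_iff.mpr ⟨⟨x, hx⟩, hG_ne_univ⟩
  refine (isClosed_frontier.notMem_iff_infDist_pos hfrontier).mp ?_
  rw [hG.frontier_eq]
  exact fun h => h.2 hx

theorem div_sqrt_sq_add_four_mul_sq_le {t d : ℝ} (ht : 0 ≤ t) (hd : 0 < d) :
    t / √(t ^ 2 + 4 * d ^ 2) ≤ 1 / √2 * (2 * (t / d) / (t / d + 2)) := by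
  have hsqrt : (t + 2 * d) / √2 ≤ √(t ^ 2 + 4 * d ^ 2) := by
    rw [Real.le_sqrt (by positivity) (by positivity), div_pow, Real.sq_sqrt zero_le_two,
      div_le_iff₀ two_pos]
    nlinarith [sq_nonneg (t - 2 * d)]
  calc t / √(t ^ 2 + 4 * d ^ 2) ≤ t / ((t + 2 * d) / √2) :=
        div_le_div_of_nonneg_left ht (by positivity) hsqrt
    _ = 1 / √2 * (2 * (t / d) / (t / d + 2)) := by
        field_simp
        rw [Real.sq_sqrt zero_le_two]

theorem div_sqrt_sq_add_four_mul_le_inv_sqrt_two_mul_log {t a b : ℝ} (ht : 0 ≤ t)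
    (ha : 0 < a) (hb : 0 < b) :
    t / √(t ^ 2 + 4 * a * b) ≤ 1 / √2 * Real.log (1 + t / min a b) := by
  set d := min a b
  have hd : 0 < d := lt_min ha hb
  have hprod : d ^ 2 ≤ a * b := by
    rw [sq]
    exact mul_le_mul (min_le_left a b) (min_le_right a b) hd.le ha.le
  calc t / √(t ^ 2 + 4 * a * b) ≤ t / √(t ^ 2 + 4 * d ^ 2) :=
        div_le_div_of_nonneg_left ht (by positivity) (Real.sqrt_le_sqrt (by linarith))
    _ ≤ 1 / √2 * (2 * (t / d) / (t / d + 2)) := div_sqrt_sq_add_four_mul_sq_le ht hd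
    _ ≤ 1 / √2 * Real.log (1 + t / d) := by
        gcongr
        exact Real.le_log_one_add_of_nonneg (by positivity)

theorem pG_le_inv_sqrt_two_mul_jG_general {n : ℕ}
    (G : Set (EuclideanSpace ℝ (Fin n)))
    (hGopen : IsOpen G) (hGproper : G ≠ univ)
    (x y : EuclideanSpace ℝ (Fin n)) (hx : x ∈ G) (hy : y ∈ G) :
    pMetric G x y ≤ (1 / Real.sqrt 2) * distRatio G x y :=
  div_sqrt_sq_add_four_mul_le_inv_sqrt_two_mul_log dist_nonneg
    (infDist_frontier_pos_of_isOpen hGopen hGproper hx)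
    (infDist_frontier_pos_of_isOpen hGopen hGproper hy)

/-- For a proper subdomain `G ⊊ ℝⁿ` and all `x, y ∈ G`,
`p_G(x,y) ≤ (1/√2) · j_G(x,y)`. -/
theorem pG_le_inv_sqrt_two_mul_jG {n : ℕ}
    (G : Set (EuclideanSpace ℝ (Fin n)))
    (hGopen : IsOpen G) (hGconn : IsConnected G) (hGproper : G ≠ univ)
    (x y : EuclideanSpace ℝ (Fin n)) (hx : x ∈ G) (hy : y ∈ G) :
    pMetric G x y ≤ (1 / Real.sqrt 2) * distRatio G x y :=
  pG_le_inv_sqrt_two_mul_jG_general G hGopen hGproper x y hx hy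
end

section
/- Let G be a convex proper subdomain of ℝⁿ. Then for all x, y ∈ G, s_G(x,y) ≤ p_G(x,y). -/
open Metric Set

open scoped RealInnerProductSpace

/-- For a convex proper subdomain `G ⊊ ℝⁿ` and all `x, y ∈ G`,
`s_G(x,y) ≤ p_G(x,y)`. -/
theorem sG_le_pG_of_convex {n : ℕ}
    (G : Set (EuclideanSpace ℝ (Fin n)))
    (hGopen : IsOpen G) (hGconn : IsConnected G) (hGproper : G ≠ univ)
    (hGconv : Convex ℝ G)
    (x y : EuclideanSpace ℝ (Fin n)) (hx : x ∈ G) (hy : y ∈ G) :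
    triangularRatio G x y ≤ pMetric G x y := by
  classical
  obtain ⟨b, hbf, hbd0⟩ := exists_mem_frontier_infDist_compl_eq_dist hx hGproper
  have hfne : (frontier G).Nonempty := ⟨b, hbf⟩
  haveI : Nonempty (frontier G) := hfne.to_subtype
  have hBdCompl : ∀ u : EuclideanSpace ℝ (Fin n), u ∈ G → distBd G u ≤ infDist u Gᶜ := by
    intro u hu
    obtain ⟨c, hcf, hcd⟩ := exists_mem_frontier_infDist_compl_eq_dist hu hGproper
    rw [distBd, hcd]
    exact infDist_le_dist_of_mem hcf
  have hdpos : ∀ u : EuclideanSpace ℝ (Fin n), u ∈ G → 0 < distBd G u := by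
    intro u hu
    refine (isClosed_frontier.notMem_iff_infDist_pos hfne).mp ?_
    rw [hGopen.frontier_eq]
    exact fun h => h.2 hu
  have hdx := hdpos x hx
  have hdy := hdpos y hy
  have hS : (0:ℝ) < Real.sqrt (dist x y ^ 2 + 4 * distBd G x * distBd G y) := by
    apply Real.sqrt_pos.mpr; positivity
  rw [triangularRatio]
  apply ciSup_le
  rintro ⟨z, hz⟩
  -- supporting hyperplane at z
  have hznG : z ∉ G := by rw [hGopen.frontier_eq] at hz; exact hz.2
  obtain ⟨f, hf⟩ := geometric_hahn_banach_open_point hGconv hGopen hznG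
  set v : EuclideanSpace ℝ (Fin n) := (InnerProductSpace.toDual ℝ (EuclideanSpace ℝ (Fin n))).symm f with hv
  have hinner : ∀ a : EuclideanSpace ℝ (Fin n), ⟪v, a⟫ = f a := fun a => by rw [hv]; exact InnerProductSpace.toDual_symm_apply
  have hvne : v ≠ 0 := by
    intro h0
    have := hf x hx
    rw [← hinner x, ← hinner z, h0] at this
    simp at this
  set w : EuclideanSpace ℝ (Fin n) := ‖v‖⁻¹ • v with hw
  have hnw : ‖w‖ = 1 := by
    rw [hw, norm_smul]
    simp [norm_ne_zero_iff.mpr hvne]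
  have hwlt : ∀ a : EuclideanSpace ℝ (Fin n), a ∈ G → ⟪w, a⟫ < ⟪w, z⟫ := by
    intro a ha
    rw [hw, real_inner_smul_left, real_inner_smul_left, hinner, hinner]
    exact mul_lt_mul_of_pos_left (hf a ha) (by have := norm_pos_iff.mpr hvne; positivity)
  set hx' : ℝ := ⟪w, z - x⟫ with hhx
  set hy' : ℝ := ⟪w, z - y⟫ with hhy
  have hx'pos : 0 < hx' := by
    rw [hhx, inner_sub_right]; linarith [hwlt x hx]
  have hy'pos : 0 < hy' := by
    rw [hhy, inner_sub_right]; linarith [hwlt y hy]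
  -- d_G(u) ≤ height of u above the hyperplane
  have hbd : ∀ u : EuclideanSpace ℝ (Fin n), u ∈ G → distBd G u ≤ ⟪w, z - u⟫ := by
    intro u hu
    have hpos : 0 < ⟪w, z - u⟫ := by
      rw [inner_sub_right]; linarith [hwlt u hu]
    have hnotin : u + ⟪w, z - u⟫ • w ∈ Gᶜ := by
      intro hmem
      have h1 := hwlt _ hmem
      rw [inner_add_right, real_inner_smul_right, real_inner_self_eq_norm_sq, hnw,
        inner_sub_right] at h1
      simp at h1
    calc distBd G u ≤ infDist u Gᶜ := hBdCompl u hu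
      _ ≤ dist u (u + ⟪w, z - u⟫ • w) := infDist_le_dist_of_mem hnotin
      _ = ⟪w, z - u⟫ := by
          rw [dist_self_add_right, norm_smul, hnw, Real.norm_eq_abs,
            abs_of_pos hpos, mul_one]
  have hbx := hbd x hx
  have hby := hbd y hy
  -- expansion of norms
  have expand : ∀ (a : EuclideanSpace ℝ (Fin n)) (t : ℝ), ‖a - t • w‖ ^ 2 = ‖a‖ ^ 2 - 2 * t * ⟪a, w⟫ + t ^ 2 := by
    intro a t
    rw [norm_sub_sq_real, real_inner_smul_right, norm_smul, hnw, Real.norm_eq_abs]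
    ring_nf
    rw [sq_abs]
  set y2 : EuclideanSpace ℝ (Fin n) := y + (2 * hy') • w with hy2
  have hzy2 : dist z y2 = dist z y := by
    have h1 : ‖z - y2‖ ^ 2 = ‖z - y‖ ^ 2 := by
      have : z - y2 = (z - y) - (2 * hy') • w := by rw [hy2]; abel
      rw [this, expand, real_inner_comm, ← hhy]
      ring
    rw [dist_eq_norm, dist_eq_norm, ← Real.sqrt_sq (norm_nonneg (z - y2)), h1,
      Real.sqrt_sq (norm_nonneg (z - y))]
  have hxy2 : ‖x - y2‖ ^ 2 = dist x y ^ 2 + 4 * hx' * hy' := by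
    have h0 : x - y2 = (x - y) - (2 * hy') • w := by rw [hy2]; abel
    have h2 : ⟪x - y, w⟫ = hy' - hx' := by
      rw [real_inner_comm, hhy, hhx, ← inner_sub_right]
      congr 1
      abel
    rw [h0, expand, h2, dist_eq_norm]
    ring
  -- main chain of inequalities
  have hchain : Real.sqrt (dist x y ^ 2 + 4 * distBd G x * distBd G y)
      ≤ dist x z + dist z y := by
    have h1 : dist x y2 = Real.sqrt (dist x y ^ 2 + 4 * hx' * hy') := by
      rw [dist_eq_norm, ← Real.sqrt_sq (norm_nonneg (x - y2)), hxy2]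
    calc Real.sqrt (dist x y ^ 2 + 4 * distBd G x * distBd G y)
        ≤ Real.sqrt (dist x y ^ 2 + 4 * hx' * hy') := by
          apply Real.sqrt_le_sqrt
          have : distBd G x * distBd G y ≤ hx' * hy' :=
            mul_le_mul hbx hby (le_of_lt hdy) (le_of_lt hx'pos)
          nlinarith
      _ = dist x y2 := h1.symm
      _ ≤ dist x z + dist z y2 := dist_triangle x z y2
      _ = dist x z + dist z y := by rw [hzy2]
  rw [pMetric]
  exact div_le_div_of_nonneg_left dist_nonneg hS hchain
end

section
/- Let G be a proper subdomain of ℝⁿ. Then for all x, y ∈ G, p_G(x,y) ≤ √2 · s_G(x,y). -/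
open Metric Set

lemma pMetric_comm' {n : ℕ} (G : Set (EuclideanSpace ℝ (Fin n)))
    (x y : EuclideanSpace ℝ (Fin n)) : pMetric G x y = pMetric G y x := by
  unfold pMetric
  rw [dist_comm, mul_right_comm]

lemma triangularRatio_comm' {n : ℕ} (G : Set (EuclideanSpace ℝ (Fin n)))
    (x y : EuclideanSpace ℝ (Fin n)) : triangularRatio G x y = triangularRatio G y x := by
  unfold triangularRatio
  congr 1
  ext z
  rw [dist_comm x y, dist_comm x z.1, dist_comm z.1 y, add_comm]

lemma aux_pG {n : ℕ}
    (G : Set (EuclideanSpace ℝ (Fin n)))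
    (hne : (frontier G).Nonempty)
    (x y : EuclideanSpace ℝ (Fin n))
    (hab : distBd G x ≤ distBd G y) :
    pMetric G x y ≤ Real.sqrt 2 * triangularRatio G x y := by
  set t := dist x y with ht
  set a := distBd G x with hadef
  set b := distBd G y with hbdef
  have ha : 0 ≤ a := infDist_nonneg
  have hb : 0 ≤ b := infDist_nonneg
  have ht0 : 0 ≤ t := dist_nonneg
  have hbdd : BddAbove (range fun z : frontier G => t / (dist x z.1 + dist z.1 y)) := by
    refine ⟨1, ?_⟩
    rintro _ ⟨z, rfl⟩
    show t / (dist x z.1 + dist z.1 y) ≤ 1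
    rcases eq_or_lt_of_le (by positivity : (0:ℝ) ≤ dist x z.1 + dist z.1 y) with h | h
    · rw [← h, div_zero]; exact zero_le_one
    · exact div_le_one_of_le₀ (dist_triangle _ _ _) h.le
  have hs0 : 0 ≤ triangularRatio G x y := by
    obtain ⟨z, hz⟩ := hne
    refine le_trans ?_ (le_ciSup hbdd ⟨z, hz⟩)
    positivity
  rcases eq_or_lt_of_le ht0 with h0 | h0
  · have hp : pMetric G x y = 0 := by
      rw [pMetric, ← ht, ← h0, zero_div]
    rw [hp]
    positivity
  -- main case t > 0
  obtain ⟨z, hz, hdz⟩ := isClosed_frontier.exists_infDist_eq_dist hne x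
  have hxz : dist x z = a := by rw [hadef, distBd, hdz]
  have hzy : dist z y ≤ a + t := by
    calc dist z y ≤ dist z x + dist x y := dist_triangle _ _ _
    _ = a + t := by rw [dist_comm z x, hxz]
  have hsum_pos : 0 < dist x z + dist z y := lt_of_lt_of_le h0 (dist_triangle x z y)
  have step1 : t / (t + 2 * a) ≤ triangularRatio G x y := by
    refine le_trans ?_ (le_ciSup hbdd ⟨z, hz⟩)
    apply div_le_div_of_nonneg_left ht0 hsum_pos
    calc dist x z + dist z y ≤ a + (a + t) := add_le_add hxz.le hzy
    _ = t + 2 * a := by ring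
  have hD : 0 < t ^ 2 + 4 * a * b := by positivity
  have hkey : t + 2 * a ≤ Real.sqrt 2 * Real.sqrt (t ^ 2 + 4 * a * b) := by
    rw [← Real.sqrt_mul (by norm_num)]
    calc t + 2 * a = Real.sqrt ((t + 2 * a) ^ 2) := (Real.sqrt_sq (by positivity)).symm
    _ ≤ Real.sqrt (2 * (t ^ 2 + 4 * a * b)) := by
        apply Real.sqrt_le_sqrt
        nlinarith [sq_nonneg (t - 2 * a), mul_nonneg ha (sub_nonneg.mpr hab)]
  have step2 : pMetric G x y ≤ Real.sqrt 2 * (t / (t + 2 * a)) := by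
    rw [pMetric, ← ht, ← hadef, ← hbdef]
    have h1 : t / Real.sqrt (t ^ 2 + 4 * a * b) ≤ t / ((t + 2 * a) / Real.sqrt 2) := by
      apply div_le_div_of_nonneg_left ht0 (by positivity)
      rw [div_le_iff₀ (by positivity : (0:ℝ) < Real.sqrt 2)]
      linarith [hkey]
    calc t / Real.sqrt (t ^ 2 + 4 * a * b) ≤ t / ((t + 2 * a) / Real.sqrt 2) := h1
    _ = Real.sqrt 2 * (t / (t + 2 * a)) := by
        rw [div_div_eq_mul_div]; ring
  calc pMetric G x y ≤ Real.sqrt 2 * (t / (t + 2 * a)) := step2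
  _ ≤ Real.sqrt 2 * triangularRatio G x y :=
    mul_le_mul_of_nonneg_left step1 (Real.sqrt_nonneg 2)

/-- For a proper subdomain `G ⊊ ℝⁿ` and all `x, y ∈ G`,
`p_G(x,y) ≤ √2 · s_G(x,y)`. -/
theorem pG_le_sqrt_two_mul_sG {n : ℕ}
    (G : Set (EuclideanSpace ℝ (Fin n)))
    (hGopen : IsOpen G) (hGconn : IsConnected G) (hGproper : G ≠ univ)
    (x y : EuclideanSpace ℝ (Fin n)) (hx : x ∈ G) (hy : y ∈ G) :
    pMetric G x y ≤ Real.sqrt 2 * triangularRatio G x y := by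
  have hne : (frontier G).Nonempty := by
    rw [nonempty_frontier_iff]
    exact ⟨hGconn.nonempty, hGproper⟩
  rcases le_total (distBd G x) (distBd G y) with h | h
  · exact aux_pG G hne x y h
  · rw [pMetric_comm', triangularRatio_comm']
    exact aux_pG G hne y x h
end

section
/- Let Hⁿ = {x = (x₁,…,xₙ) ∈ ℝⁿ : xₙ > 0} be the upper half-space. Then for all x, y ∈ Hⁿ, s_{Hⁿ}(x,y) = |x−y|/|x−ȳ| = |x−y|/√(|x−y|² + 4·xₙ·yₙ), where ȳ denotes the reflection of y in the hyperplane {xₙ = 0}. In particular s_{Hⁿ}(x,y) = p_{Hⁿ}(x,y), since d_{Hⁿ}(x) = xₙ and d_{Hⁿ}(y) = yₙ. -/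
open Metric Set

/-! Points `z` of the boundary hyperplane are equidistant from `y` and its mirror image `ȳ`, so
`|x - z| + |z - y| = |x - z| + |z - ȳ| ≥ |x - ȳ|`, with equality where the segment `[x, ȳ]`
crosses the hyperplane. Hence the supremum is `|x - y| / |x - ȳ|`. Expanding the last coordinate
gives `|x - ȳ|² = |x - y|² + 4 xₙ yₙ`, and `d(x) = xₙ` identifies this with `p(x, y)`. -/

section Coordinates

variable {ι : Type*}

theorem exists_mem_segment_apply_eq_zero {a b : EuclideanSpace ℝ ι} {i : ι}
    (ha : 0 ≤ a i) (hb : b i ≤ 0) : ∃ z ∈ segment ℝ a b, z i = 0 := by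
  have h0 : (0 : ℝ) ∈ segment ℝ (a i) (b i) := by
    rw [segment_eq_uIcc]; exact ⟨inf_le_right.trans hb, ha.trans le_sup_left⟩
  exact (image_segment ℝ (EuclideanSpace.proj (𝕜 := ℝ) i).toLinearMap.toAffineMap a b).ge h0

variable [Fintype ι]

theorem frontier_setOf_pos_apply (i : ι) :
    frontier {z : EuclideanSpace ℝ ι | 0 < z i} = {z | z i = 0} := by
  classical
  have hsurj : Function.Surjective (EuclideanSpace.proj (𝕜 := ℝ) i) := fun c =>
    ⟨EuclideanSpace.single i c, by simp⟩
  have hopen := (EuclideanSpace.proj (𝕜 := ℝ) i).isOpenMap hsurj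
  change frontier (EuclideanSpace.proj i ⁻¹' Ioi 0) = EuclideanSpace.proj i ⁻¹' {0}
  rw [← hopen.preimage_frontier_eq_frontier_preimage (EuclideanSpace.proj i).continuous,
    frontier_Ioi]

theorem infDist_setOf_apply_eq_zero [DecidableEq ι] (w : EuclideanSpace ℝ ι) (i : ι) :
    infDist w {z : EuclideanSpace ℝ ι | z i = 0} = |w i| := by
  set w₀ : EuclideanSpace ℝ ι := WithLp.toLp 2 (Function.update w i 0)
  have hw₀ : w₀ i = 0 := Function.update_self _ _ _
  apply le_antisymm
  · calc infDist w {z : EuclideanSpace ℝ ι | z i = 0} ≤ dist w w₀ := infDist_le_dist_of_mem hw₀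
      _ = |w i| := by
        rw [EuclideanSpace.dist_eq, Finset.sum_eq_single i, hw₀, Real.dist_eq, sub_zero,
          Real.sqrt_sq_eq_abs, abs_abs]
        · intro j _ hji
          simp [w₀, Function.update_of_ne hji]
        · simp
  · refine (le_infDist ⟨w₀, hw₀⟩).2 fun z (hz : z i = 0) => ?_
    simpa [hz, Real.dist_eq] using PiLp.dist_apply_le w z i

end Coordinates

section Reflection

variable {ι : Type*} [Fintype ι] [DecidableEq ι]

/-- The reflection `ȳ` of `y` in the coordinate hyperplane `{z i = 0}`. -/
def reflectCoord (i : ι) (y : EuclideanSpace ℝ ι) : EuclideanSpace ℝ ι :=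
  WithLp.toLp 2 (Function.update y i (-(y i)))

theorem dist_reflectCoord_of_apply_eq_zero {z : EuclideanSpace ℝ ι} {i : ι} (hz : z i = 0)
    (y : EuclideanSpace ℝ ι) : dist z (reflectCoord i y) = dist z y := by
  rw [EuclideanSpace.dist_eq, EuclideanSpace.dist_eq]
  congr 1
  refine Finset.sum_congr rfl fun j _ => ?_
  rcases eq_or_ne j i with rfl | hji
  · simp [reflectCoord, hz, Real.dist_eq]
  · simp [reflectCoord, Function.update_of_ne hji]

theorem dist_reflectCoord_sq (x y : EuclideanSpace ℝ ι) (i : ι) :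
    dist x (reflectCoord i y) ^ 2 = dist x y ^ 2 + 4 * x i * y i := by
  have hcoord : ∀ j, dist (x j) (reflectCoord i y j) ^ 2 =
      dist (x j) (y j) ^ 2 + if j = i then 4 * x i * y i else 0 := by
    intro j
    rcases eq_or_ne j i with rfl | hji
    · simp only [reflectCoord, Function.update_self, Real.dist_eq, sub_neg_eq_add, sq_abs,
        ↓reduceIte]
      ring
    · simp [reflectCoord, hji]
  rw [EuclideanSpace.dist_eq, EuclideanSpace.dist_eq,
    Real.sq_sqrt (Finset.sum_nonneg fun j _ => sq_nonneg _),
    Real.sq_sqrt (Finset.sum_nonneg fun j _ => sq_nonneg _), Finset.sum_congr rfl fun j _ => hcoord j,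
    Finset.sum_add_distrib, Finset.sum_ite_eq' Finset.univ i, if_pos (Finset.mem_univ i)]

theorem dist_reflectCoord (x y : EuclideanSpace ℝ ι) (i : ι) :
    dist x (reflectCoord i y) = √(dist x y ^ 2 + 4 * x i * y i) := by
  rw [← dist_reflectCoord_sq, Real.sqrt_sq dist_nonneg]

end Reflection

theorem triangularRatio_eq_div_dist_of_mem_segment {n : ℕ} {G : Set (EuclideanSpace ℝ (Fin n))}
    {x y y' z₀ : EuclideanSpace ℝ (Fin n)} (hxy' : x ≠ y')
    (hy' : ∀ z ∈ frontier G, dist z y = dist z y') (hz₀ : z₀ ∈ frontier G)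
    (hseg : z₀ ∈ segment ℝ x y') :
    triangularRatio G x y = dist x y / dist x y' := by
  have hbound : ∀ z : frontier G,
      dist x y / (dist x z.1 + dist z.1 y) ≤ dist x y / dist x y' := by
    rintro ⟨z, hz⟩
    rw [hy' z hz]
    exact div_le_div_of_nonneg_left dist_nonneg (dist_pos.2 hxy') (dist_triangle x z y')
  have hattained : dist x y / (dist x z₀ + dist z₀ y) = dist x y / dist x y' := by
    rw [hy' z₀ hz₀, dist_add_dist_of_mem_segment hseg]
  have : Nonempty (frontier G) := ⟨⟨z₀, hz₀⟩⟩
  refine le_antisymm (ciSup_le hbound) ?_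
  rw [← hattained]
  exact le_ciSup ⟨_, forall_mem_range.2 hbound⟩ (⟨z₀, hz₀⟩ : frontier G)

theorem triangularRatio_setOf_pos_apply {n : ℕ} {x y : EuclideanSpace ℝ (Fin n)} {i : Fin n}
    (hx : 0 < x i) (hy : 0 < y i) :
    triangularRatio {z | 0 < z i} x y = dist x y / dist x (reflectCoord i y) := by
  have hyi : reflectCoord i y i = -y i := by simp [reflectCoord]
  obtain ⟨z₀, hseg, hz₀⟩ :=
    exists_mem_segment_apply_eq_zero (b := reflectCoord i y) hx.le (by linarith)
  refine triangularRatio_eq_div_dist_of_mem_segment ?_ ?_ ?_ hseg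
  · intro h
    have := congrArg (· i) h
    simp only [hyi] at this
    linarith
  · intro z hz
    rw [frontier_setOf_pos_apply] at hz
    exact (dist_reflectCoord_of_apply_eq_zero hz y).symm
  · rwa [frontier_setOf_pos_apply]

theorem distBd_setOf_pos_apply {n : ℕ} {w : EuclideanSpace ℝ (Fin n)} {i : Fin n}
    (hw : 0 ≤ w i) : distBd {z | 0 < z i} w = w i := by
  rw [distBd, frontier_setOf_pos_apply, infDist_setOf_apply_eq_zero, abs_of_nonneg hw]

/-- For the upper half-space `Hⁿ = {x ∈ ℝⁿ : xₙ > 0}` and all `x, y ∈ Hⁿ`: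
`s_{Hⁿ}(x,y) = |x-y|/|x-ȳ|`, where `ȳ` is the reflection of `y` in `{xₙ = 0}`,
`|x-ȳ| = √(|x-y|² + 4 xₙ yₙ)`, and in particular `s_{Hⁿ}(x,y) = p_{Hⁿ}(x,y)`. -/
theorem sH_eq_dist_div_dist_reflection {n : ℕ}
    (x y : EuclideanSpace ℝ (Fin (n + 1)))
    (hx : 0 < x (Fin.last n)) (hy : 0 < y (Fin.last n)) :
    triangularRatio {z : EuclideanSpace ℝ (Fin (n + 1)) | 0 < z (Fin.last n)} x y =
        dist x y / dist x
          (WithLp.toLp 2 (Function.update y (Fin.last n) (-(y (Fin.last n)))) : EuclideanSpace ℝ (Fin (n + 1))) ∧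
      dist x (WithLp.toLp 2 (Function.update y (Fin.last n) (-(y (Fin.last n)))) : EuclideanSpace ℝ (Fin (n + 1))) =
        Real.sqrt (dist x y ^ 2 + 4 * x (Fin.last n) * y (Fin.last n)) ∧
      triangularRatio {z : EuclideanSpace ℝ (Fin (n + 1)) | 0 < z (Fin.last n)} x y =
        pMetric {z : EuclideanSpace ℝ (Fin (n + 1)) | 0 < z (Fin.last n)} x y := by
  have hs := triangularRatio_setOf_pos_apply hx hy
  have hd := dist_reflectCoord x y (Fin.last n)
  refine ⟨hs, hd, ?_⟩
  rw [hs, hd, pMetric, distBd_setOf_pos_apply hx.le, distBd_setOf_pos_apply hy.le]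
end

section
/- Let x, y ∈ 𝔹ⁿ (the open unit ball of ℝⁿ) be distinct points, and let |m| = √(|x|²|y|² − (x·y)²)/|x−y| (the distance from the origin to the line through x and y). Then s_{𝔹ⁿ}(x,y) ≥ |x−y|/√(|x−y|² + 4(1−|m|)²). -/
open Metric Set

/-! If the line through `x` and `y` misses the origin, take `z` on the unit sphere, in the plane
of `0, x, y`, on the perpendicular bisector of `[x, y]` and on the far side of the line from the
origin. Its distance `h` to the line is at most `1 - |m|`, so
`|x - z| + |z - y| = 2 √(|x - y|² / 4 + h²) ≤ √(|x - y|² + 4 (1 - |m|)²)`.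
If the line passes through the origin, one of the two points where it meets the sphere gives
`|x - z| + |z - y| ≤ 2`. -/

open scoped InnerProductSpace

section Geometry

variable {E : Type*} [NormedAddCommGroup E] [InnerProductSpace ℝ E]

lemma dist_smul_add_smul_of_orthonormal {u e : E} (hu : ‖u‖ = 1) (he : ‖e‖ = 1)
    (hue : ⟪u, e⟫_ℝ = 0) (α β γ δ : ℝ) :
    dist (α • u + β • e) (γ • u + δ • e) = √((α - γ) ^ 2 + (β - δ) ^ 2) := by
  have hperp : ⟪(α - γ) • u, (β - δ) • e⟫_ℝ = 0 := by
    rw [real_inner_smul_left, real_inner_smul_right, hue, mul_zero, mul_zero]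
  rw [dist_eq_norm, show α • u + β • e - (γ • u + δ • e) = (α - γ) • u + (β - δ) • e by module,
    norm_add_eq_sqrt_iff_real_inner_eq_zero.mpr hperp, norm_smul, norm_smul, hu, he, mul_one,
    mul_one, Real.norm_eq_abs, Real.norm_eq_abs, abs_mul_abs_self, abs_mul_abs_self, ← sq, ← sq]

lemma exists_norm_eq_one_dist_add_dist_le_of_orthonormal {u e : E} (hu : ‖u‖ = 1)
    (he : ‖e‖ = 1) (hue : ⟪u, e⟫_ℝ = 0) {d a b : ℝ} (ha : d ^ 2 + a ^ 2 < 1)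
    (hb : d ^ 2 + b ^ 2 < 1) :
    ∃ z : E, ‖z‖ = 1 ∧
      dist (d • u + a • e) z + dist z (d • u + b • e) ≤ √((a - b) ^ 2 + 4 * (1 - d) ^ 2) := by
  have hc : d ^ 2 + ((a + b) / 2) ^ 2 ≤ 1 := by nlinarith [sq_nonneg (a - b)]
  set c := (a + b) / 2
  set T := √(1 - c ^ 2)
  have hT : T ^ 2 = 1 - c ^ 2 := Real.sq_sqrt (by nlinarith)
  have hdT : d ≤ T := Real.le_sqrt_of_sq_le (by linarith)
  have hT1 : T ≤ 1 := Real.sqrt_le_one.mpr (by nlinarith)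
  refine ⟨T • u + c • e, ?_, ?_⟩
  · simpa [hT] using dist_smul_add_smul_of_orthonormal hu he hue T c 0 0
  · rw [dist_smul_add_smul_of_orthonormal hu he hue, dist_smul_add_smul_of_orthonormal hu he hue,
      show (d - T) ^ 2 + (a - c) ^ 2 = (T - d) ^ 2 + ((a - b) / 2) ^ 2 by ring,
      show (T - d) ^ 2 + (c - b) ^ 2 = (T - d) ^ 2 + ((a - b) / 2) ^ 2 by ring,
      ← two_mul, Real.le_sqrt (by positivity) (by positivity), mul_pow,
      Real.sq_sqrt (by positivity)]
    nlinarith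

lemma exists_norm_eq_one_dist_add_dist_le_two {e : E} (he : ‖e‖ = 1) {a b : ℝ} (ha : |a| < 1)
    (hb : |b| < 1) : ∃ z : E, ‖z‖ = 1 ∧ dist (a • e) z + dist z (b • e) ≤ 2 := by
  have hdist (α β : ℝ) : dist (α • e) (β • e) = |α - β| := by
    rw [dist_eq_norm, ← sub_smul, norm_smul, he, mul_one, Real.norm_eq_abs]
  rw [abs_lt] at ha hb
  rcases le_total 0 (a + b) with hab | hab
  · refine ⟨(1 : ℝ) • e, by rw [one_smul, he], ?_⟩
    rw [hdist, hdist, abs_of_neg (by linarith), abs_of_pos (by linarith)]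
    linarith
  · refine ⟨(-1 : ℝ) • e, by rw [neg_smul, one_smul, norm_neg, he], ?_⟩
    rw [hdist, hdist, abs_of_pos (by linarith), abs_of_neg (by linarith)]
    linarith

lemma exists_norm_eq_one_dist_add_dist_le_of_inner_eq_zero {p e : E} (he : ‖e‖ = 1)
    (hpe : ⟪p, e⟫_ℝ = 0) {a b : ℝ} (ha : ‖p + a • e‖ < 1) (hb : ‖p + b • e‖ < 1) :
    ∃ z : E, ‖z‖ = 1 ∧
      dist (p + a • e) z + dist z (p + b • e) ≤ √((a - b) ^ 2 + 4 * (1 - ‖p‖) ^ 2) := by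
  have hnorm_sq (c : ℝ) : ‖p + c • e‖ ^ 2 = ‖p‖ ^ 2 + c ^ 2 := by
    rw [norm_add_sq_real, real_inner_smul_right, hpe, norm_smul, he, mul_one, Real.norm_eq_abs,
      sq_abs]
    ring
  have ha' := hnorm_sq a ▸ pow_lt_one₀ (norm_nonneg _) ha two_ne_zero
  have hb' := hnorm_sq b ▸ pow_lt_one₀ (norm_nonneg _) hb two_ne_zero
  rcases eq_or_ne p 0 with rfl | hp
  · obtain ⟨z, hz, hle⟩ := exists_norm_eq_one_dist_add_dist_le_two he
      ((sq_lt_one_iff_abs_lt_one a).mp (by simpa using ha'))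
      ((sq_lt_one_iff_abs_lt_one b).mp (by simpa using hb'))
    refine ⟨z, hz, ?_⟩
    simp only [zero_add, norm_zero, sub_zero] at hle ⊢
    exact hle.trans (Real.le_sqrt_of_sq_le (by nlinarith [sq_nonneg (a - b)]))
  · set u := ‖p‖⁻¹ • p
    have hu : ‖u‖ = 1 := norm_smul_inv_norm hp
    have hue : ⟪u, e⟫_ℝ = 0 := by rw [real_inner_smul_left, hpe, mul_zero]
    have hpu : p = ‖p‖ • u := (smul_inv_smul₀ (norm_ne_zero_iff.mpr hp) p).symm
    have := exists_norm_eq_one_dist_add_dist_le_of_orthonormal hu he hue ha' hb'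
    rwa [← hpu] at this

/-- Lagrange's identity: the distance from the origin to the line through `x` and `y`. -/
lemma norm_sub_inner_smul_eq {x y e : E} {s : ℝ} (hs : 0 < s) (he : ‖e‖ = 1)
    (hxy : x - y = s • e) :
    ‖x - ⟪x, e⟫_ℝ • e‖ = √(‖x‖ ^ 2 * ‖y‖ ^ 2 - ⟪x, y⟫_ℝ ^ 2) / s := by
  have hy : y = x - s • e := by rw [← hxy, sub_sub_cancel]
  have hnorm_sq : ‖x - ⟪x, e⟫_ℝ • e‖ ^ 2 = ‖x‖ ^ 2 - ⟪x, e⟫_ℝ ^ 2 := by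
    rw [norm_sub_sq_real, real_inner_smul_right, norm_smul, he, mul_one, Real.norm_eq_abs,
      sq_abs]
    ring
  have hlagrange : ‖x‖ ^ 2 * ‖y‖ ^ 2 - ⟪x, y⟫_ℝ ^ 2 = (s * ‖x - ⟪x, e⟫_ℝ • e‖) ^ 2 := by
    rw [mul_pow, hnorm_sq, hy, norm_sub_sq_real, inner_sub_right, real_inner_smul_right,
      real_inner_self_eq_norm_sq, norm_smul, he, mul_one, Real.norm_eq_abs, sq_abs]
    ring
  rw [hlagrange, Real.sqrt_sq (by positivity), mul_div_cancel_left₀ _ hs.ne']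

theorem exists_norm_eq_one_dist_add_dist_le {x y : E} (hx : ‖x‖ < 1) (hy : ‖y‖ < 1)
    (hxy : x ≠ y) :
    ∃ z : E, ‖z‖ = 1 ∧ dist x z + dist z y ≤
      √(‖x - y‖ ^ 2 + 4 * (1 - √(‖x‖ ^ 2 * ‖y‖ ^ 2 - ⟪x, y⟫_ℝ ^ 2) / ‖x - y‖) ^ 2) := by
  set s := ‖x - y‖
  have hs : 0 < s := norm_sub_pos_iff.mpr hxy
  set e := s⁻¹ • (x - y)
  have he : ‖e‖ = 1 := norm_smul_inv_norm (sub_ne_zero.mpr hxy)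
  have hse : x - y = s • e := (smul_inv_smul₀ hs.ne' _).symm
  set a := ⟪x, e⟫_ℝ
  set p := x - a • e
  have hpe : ⟪p, e⟫_ℝ = 0 := by
    rw [inner_sub_left, real_inner_smul_left, real_inner_self_eq_norm_sq, he]
    ring
  have hx' : x = p + a • e := (sub_add_cancel x _).symm
  have hy' : y = p + (a - s) • e := by
    rw [sub_smul, ← hse]
    simp only [p]
    abel
  rw [← norm_sub_inner_smul_eq hs he hse]
  obtain ⟨z, hz, hle⟩ :=
    exists_norm_eq_one_dist_add_dist_le_of_inner_eq_zero he hpe (hx' ▸ hx) (hy' ▸ hy)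
  refine ⟨z, hz, ?_⟩
  rwa [← hx', ← hy', sub_sub_cancel] at hle

end Geometry

lemma le_triangularRatio {n : ℕ} {G : Set (EuclideanSpace ℝ (Fin n))}
    (x y : EuclideanSpace ℝ (Fin n)) {z : EuclideanSpace ℝ (Fin n)} (hz : z ∈ frontier G) :
    dist x y / (dist x z + dist z y) ≤ triangularRatio G x y := by
  refine le_ciSup (f := fun w : frontier G => dist x y / (dist x w.1 + dist w.1 y))
    ⟨1, ?_⟩ ⟨z, hz⟩
  rintro r ⟨w, rfl⟩
  exact div_le_one_of_le₀ (dist_triangle x w.1 y) (by positivity)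

/-- For distinct `x, y` in the unit ball `𝔹ⁿ`, with `|m| = √(|x|²|y|² - ⟨x,y⟩²)/|x-y|`
the distance from the origin to the line through `x` and `y`,
`s_{𝔹ⁿ}(x,y) ≥ |x-y| / √(|x-y|² + 4(1-|m|)²)`. -/
theorem sB_ge_symmetric_bound {n : ℕ}
    (x y : EuclideanSpace ℝ (Fin n)) (hx : ‖x‖ < 1) (hy : ‖y‖ < 1) (hxy : x ≠ y) :
    triangularRatio (Metric.ball (0 : EuclideanSpace ℝ (Fin n)) 1) x y ≥
      ‖x - y‖ / Real.sqrt (‖x - y‖ ^ 2 +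
        4 * (1 - Real.sqrt (‖x‖ ^ 2 * ‖y‖ ^ 2 - (inner ℝ x y : ℝ) ^ 2) / ‖x - y‖) ^ 2) := by
  obtain ⟨z, hz, hle⟩ := exists_norm_eq_one_dist_add_dist_le hx hy hxy
  have hz' : z ∈ frontier (ball (0 : EuclideanSpace ℝ (Fin n)) 1) := by
    rwa [frontier_ball 0 one_ne_zero, mem_sphere_zero_iff_norm]
  have hpos : 0 < dist x z + dist z y := (dist_pos.mpr hxy).trans_le (dist_triangle x z y)
  calc _ ≤ dist x y / (dist x z + dist z y) := by
        rw [dist_eq_norm]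
        exact div_le_div_of_nonneg_left (norm_nonneg _) hpos hle
    _ ≤ _ := le_triangularRatio x y hz'
end

section
/- For all x, y ∈ 𝔹ⁿ (the open unit ball of ℝⁿ), p_{𝔹ⁿ}(x,y) ≤ |x−y|/√(|x−y|² + (1−|x|²)(1−|y|²)) ≤ 2·p_{𝔹ⁿ}(x,y). (The middle quantity equals tanh(ρ_{𝔹ⁿ}(x,y)/2), where ρ_{𝔹ⁿ} is the hyperbolic metric of the unit ball.) -/
open Metric Set

/-! In the unit ball `d(x) = 1 - ‖x‖`, and
`(1 - ‖x‖²)(1 - ‖y‖²) = (1 - ‖x‖)(1 - ‖y‖) · (1 + ‖x‖)(1 + ‖y‖)` with the last factor in `[1, 4]`.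
So the denominator `‖x - y‖² + 4 d(x) d(y)` of `p` lies between that of `tanh (ρ/2)` and four times
it, which gives both inequalities. -/

theorem infDist_sphere_zero_of_norm_le {E : Type*} [NormedAddCommGroup E] [NormedSpace ℝ E]
    [Nontrivial E] {x : E} {r : ℝ} (hx : ‖x‖ ≤ r) :
    infDist x (sphere 0 r) = r - ‖x‖ := by
  have hr : 0 ≤ r := (norm_nonneg x).trans hx
  obtain ⟨v, hv, hxv⟩ : ∃ v : E, ‖v‖ = 1 ∧ x = ‖x‖ • v := by
    rcases eq_or_ne x 0 with rfl | hx0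
    · obtain ⟨v, hv⟩ := exists_norm_eq E zero_le_one
      exact ⟨v, hv, by simp⟩
    · exact ⟨‖x‖⁻¹ • x, norm_smul_inv_norm hx0,
        (smul_inv_smul₀ (norm_ne_zero_iff.2 hx0) x).symm⟩
  apply le_antisymm
  · -- the nearest point of the sphere is `r • v`, on the ray through `x`
    have hrv : r • v ∈ sphere (0 : E) r := by
      simp [norm_smul, hv, abs_of_nonneg hr]
    calc infDist x (sphere 0 r) ≤ dist x (r • v) := infDist_le_dist_of_mem hrv
      _ = ‖(‖x‖ - r) • v‖ := by rw [dist_eq_norm, sub_smul, ← hxv]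
      _ = r - ‖x‖ := by
        rw [norm_smul, hv, mul_one, Real.norm_eq_abs, abs_of_nonpos (by linarith)]
        ring
  · refine (le_infDist (NormedSpace.sphere_nonempty.2 hr)).2 fun z hz => ?_
    rw [mem_sphere_zero_iff_norm] at hz
    rw [dist_comm, dist_eq_norm, ← hz]
    exact norm_sub_norm_le z x

theorem distBd_ball_zero {n : ℕ} [Nontrivial (EuclideanSpace ℝ (Fin n))]
    {x : EuclideanSpace ℝ (Fin n)} {r : ℝ} (hx : ‖x‖ < r) :
    distBd (ball 0 r) x = r - ‖x‖ := by
  have hr : r ≠ 0 := ((norm_nonneg x).trans_lt hx).ne'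
  rw [distBd, frontier_ball 0 hr, infDist_sphere_zero_of_norm_le hx.le]

theorem div_sqrt_le_div_sqrt {d S T : ℝ} (hd : 0 ≤ d) (hS : 0 < S) (hST : S ≤ T) :
    d / √T ≤ d / √S :=
  div_le_div_of_nonneg_left hd (Real.sqrt_pos.2 hS) (Real.sqrt_le_sqrt hST)

theorem div_sqrt_add_le_two_mul_div_sqrt_add {d A B : ℝ} (hd : 0 ≤ d) (hB : 0 < B)
    (hBA : B ≤ 4 * A) : d / √(d ^ 2 + A) ≤ 2 * (d / √(d ^ 2 + B)) := by
  have hsqrt : 2 * (d / √(d ^ 2 + B)) = d / √((d ^ 2 + B) / 4) := by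
    rw [Real.sqrt_div' _ (by norm_num : (0 : ℝ) ≤ 4),
      show √(4 : ℝ) = 2 by rw [show (4 : ℝ) = 2 ^ 2 by norm_num, Real.sqrt_sq zero_le_two]]
    field_simp
  rw [hsqrt]
  exact div_sqrt_le_div_sqrt hd (by positivity) (by nlinarith)

section UnitInterval

variable {a b : ℝ}

theorem one_sub_sq_mul_one_sub_sq_le (ha : 0 ≤ a) (ha1 : a ≤ 1) (hb1 : b ≤ 1) :
    (1 - a ^ 2) * (1 - b ^ 2) ≤ 4 * (1 - a) * (1 - b) := by
  have hfac : (1 + a) * (1 + b) ≤ 4 := by nlinarith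
  calc (1 - a ^ 2) * (1 - b ^ 2) = ((1 - a) * (1 - b)) * ((1 + a) * (1 + b)) := by ring
    _ ≤ ((1 - a) * (1 - b)) * 4 := by gcongr
    _ = 4 * (1 - a) * (1 - b) := by ring

theorem mul_one_sub_le_one_sub_sq_mul_one_sub_sq (ha : 0 ≤ a) (hb : 0 ≤ b) (ha1 : a ≤ 1)
    (hb1 : b ≤ 1) : (1 - a) * (1 - b) ≤ (1 - a ^ 2) * (1 - b ^ 2) := by
  have hfac : 1 ≤ (1 + a) * (1 + b) := by nlinarith
  calc (1 - a) * (1 - b) = ((1 - a) * (1 - b)) * 1 := by ring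
    _ ≤ ((1 - a) * (1 - b)) * ((1 + a) * (1 + b)) := by gcongr
    _ = (1 - a ^ 2) * (1 - b ^ 2) := by ring

end UnitInterval

/-- For all `x, y` in the unit ball `𝔹ⁿ`,
`p_{𝔹ⁿ}(x,y) ≤ tanh(ρ_{𝔹ⁿ}(x,y)/2) ≤ 2 p_{𝔹ⁿ}(x,y)`, where
`tanh(ρ_{𝔹ⁿ}(x,y)/2) = |x-y| / √(|x-y|² + (1-|x|²)(1-|y|²))`. -/
theorem pB_le_tanh_half_rho_le_two_pB {n : ℕ}
    (x y : EuclideanSpace ℝ (Fin n)) (hx : ‖x‖ < 1) (hy : ‖y‖ < 1) :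
    pMetric (Metric.ball (0 : EuclideanSpace ℝ (Fin n)) 1) x y ≤
        ‖x - y‖ / Real.sqrt (‖x - y‖ ^ 2 + (1 - ‖x‖ ^ 2) * (1 - ‖y‖ ^ 2)) ∧
      ‖x - y‖ / Real.sqrt (‖x - y‖ ^ 2 + (1 - ‖x‖ ^ 2) * (1 - ‖y‖ ^ 2)) ≤
        2 * pMetric (Metric.ball (0 : EuclideanSpace ℝ (Fin n)) 1) x y := by
  rcases subsingleton_or_nontrivial (EuclideanSpace ℝ (Fin n)) with _ | _
  · simp [pMetric, Subsingleton.elim x y]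
  rw [pMetric, distBd_ball_zero hx, distBd_ball_zero hy, dist_eq_norm]
  have hx0 := norm_nonneg x
  have hy0 := norm_nonneg y
  have hpos : 0 < (1 - ‖x‖) * (1 - ‖y‖) := mul_pos (by linarith) (by linarith)
  have hupper := one_sub_sq_mul_one_sub_sq_le hx0 hx.le hy.le
  have hlower := mul_one_sub_le_one_sub_sq_mul_one_sub_sq hx0 hy0 hx.le hy.le
  constructor
  · exact div_sqrt_le_div_sqrt (norm_nonneg _) (by nlinarith) (by linarith)
  · exact div_sqrt_add_le_two_mul_div_sqrt_add (norm_nonneg _) (by linarith) (by linarith)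
end

section
/- Let G ⊊ ℝⁿ be a proper subdomain, z ∈ G with d(z) = dist(z, ∂G) > 0, and 0 < λ < 1. Then for all x, y in the open ball 𝔹ⁿ(z, λ·d(z)), s_{𝔹ⁿ(z,d(z))}(x,y) ≤ ((1+2λ)/(2(1−λ))) · j_{𝔹ⁿ(z,d(z))}(x,y). -/
open Metric Set

/-!
Every boundary point `w` satisfies `|x - w| + |w - y| ≥ d(x) + d(y) ≥ 2m` with
`m = min{d(x), d(y)}`, so `s(x,y) ≤ t/2` for `t = |x-y|/m`, while `j(x,y) = log(1+t) ≥ 2t/(t+2)`.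
Hence `s ≤ ((2+t)/4) j` in any domain. In the ball `𝔹ⁿ(z,r)` and for `x, y ∈ 𝔹ⁿ(z,λr)` we have
`m > (1-λ)r` and `|x-y| < 2λr`, so `(2+t)/4 ≤ 1/(2(1-λ)) ≤ (1+2λ)/(2(1-λ))`.
-/

section

variable {n : ℕ} {G : Set (EuclideanSpace ℝ (Fin n))} {x y : EuclideanSpace ℝ (Fin n)}

theorem triangularRatio_self : triangularRatio G x x = 0 := by
  simp [triangularRatio]

theorem distRatio_self : distRatio G x x = 0 := by
  simp [distRatio]

theorem distBd_nonneg : 0 ≤ distBd G x :=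
  infDist_nonneg

theorem distRatio_nonneg : 0 ≤ distRatio G x y :=
  Real.log_nonneg <| le_add_of_nonneg_right <|
    div_nonneg dist_nonneg (le_min distBd_nonneg distBd_nonneg)

theorem triangularRatio_le_dist_div_add (h : 0 < distBd G x + distBd G y) :
    triangularRatio G x y ≤ dist x y / (distBd G x + distBd G y) := by
  refine Real.iSup_le (fun w => ?_) (div_nonneg dist_nonneg h.le)
  have hxw : distBd G x ≤ dist x w := infDist_le_dist_of_mem w.2
  have hyw : distBd G y ≤ dist w.1 y := dist_comm y w.1 ▸ infDist_le_dist_of_mem w.2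
  exact div_le_div_of_nonneg_left dist_nonneg h (by linarith)

theorem triangularRatio_le_mul_distRatio (hm : 0 < min (distBd G x) (distBd G y)) :
    triangularRatio G x y ≤
      (2 + dist x y / min (distBd G x) (distBd G y)) / 4 * distRatio G x y := by
  set m := min (distBd G x) (distBd G y)
  set t := dist x y / m
  have ht : 0 ≤ t := div_nonneg dist_nonneg hm.le
  have hsum : 2 * m ≤ distBd G x + distBd G y := by
    linarith [min_le_left (distBd G x) (distBd G y), min_le_right (distBd G x) (distBd G y)]
  calc triangularRatio G x y
      ≤ dist x y / (distBd G x + distBd G y) := triangularRatio_le_dist_div_add (by linarith)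
    _ ≤ dist x y / (2 * m) := div_le_div_of_nonneg_left dist_nonneg (by linarith) hsum
    _ = (2 + t) / 4 * (2 * t / (t + 2)) := by simp only [t]; field_simp; ring
    _ ≤ (2 + t) / 4 * distRatio G x y := by
      gcongr
      exact Real.le_log_one_add_of_nonneg ht

theorem sub_dist_le_distBd_ball [Nontrivial (EuclideanSpace ℝ (Fin n))]
    {z : EuclideanSpace ℝ (Fin n)} {r : ℝ} (hr : 0 < r) (u : EuclideanSpace ℝ (Fin n)) :
    r - dist u z ≤ distBd (ball z r) u := by
  rw [distBd, frontier_ball z hr.ne', le_infDist (NormedSpace.sphere_nonempty.2 hr.le)]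
  intro w hw
  linarith [dist_triangle z u w, dist_comm u z, mem_sphere'.1 hw]

end

theorem s_ball_le_mul_j_ball_general {n : ℕ}
    (G : Set (EuclideanSpace ℝ (Fin n)))
    (z : EuclideanSpace ℝ (Fin n))
    (hd : 0 < Metric.infDist z (frontier G))
    (lam : ℝ) (hlam0 : 0 < lam) (hlam1 : lam < 1)
    (x y : EuclideanSpace ℝ (Fin n))
    (hx : x ∈ Metric.ball z (lam * Metric.infDist z (frontier G)))
    (hy : y ∈ Metric.ball z (lam * Metric.infDist z (frontier G))) :
    triangularRatio (Metric.ball z (Metric.infDist z (frontier G))) x y ≤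
      ((1 + 2 * lam) / (2 * (1 - lam))) *
        distRatio (Metric.ball z (Metric.infDist z (frontier G))) x y := by
  set r := Metric.infDist z (frontier G)
  set B := ball z r
  rcases eq_or_ne x y with rfl | hxy
  · rw [triangularRatio_self, distRatio_self, mul_zero]
  have : Nontrivial (EuclideanSpace ℝ (Fin n)) := nontrivial_of_ne x y hxy
  have hm : (1 - lam) * r ≤ min (distBd B x) (distBd B y) :=
    le_min (by linarith [mem_ball.1 hx, sub_dist_le_distBd_ball (z := z) hd x])
      (by linarith [mem_ball.1 hy, sub_dist_le_distBd_ball (z := z) hd y])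
  have hm0 : 0 < (1 - lam) * r := mul_pos (by linarith) hd
  have ht : dist x y / min (distBd B x) (distBd B y) ≤ 2 * lam / (1 - lam) :=
    calc dist x y / min (distBd B x) (distBd B y)
        ≤ 2 * lam * r / ((1 - lam) * r) := by
          gcongr
          linarith [mem_ball.1 hx, mem_ball.1 hy, dist_triangle_right x y z]
      _ = 2 * lam / (1 - lam) := mul_div_mul_right _ _ hd.ne'
  have hj : 0 ≤ distRatio B x y := distRatio_nonneg
  calc triangularRatio B x y
      ≤ (2 + dist x y / min (distBd B x) (distBd B y)) / 4 * distRatio B x y :=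
        triangularRatio_le_mul_distRatio (hm0.trans_le hm)
    _ ≤ (2 + 2 * lam / (1 - lam)) / 4 * distRatio B x y := by gcongr
    _ = 1 / (2 * (1 - lam)) * distRatio B x y := by
      field_simp [(by linarith : (1 - lam) ≠ 0)]
      ring
    _ ≤ (1 + 2 * lam) / (2 * (1 - lam)) * distRatio B x y := by
      gcongr
      all_goals linarith

/-- For a proper subdomain `G ⊊ ℝⁿ`, `z ∈ G` with `d(z) = dist(z,∂G) > 0`, `0 < λ < 1`,
and all `x, y ∈ 𝔹ⁿ(z, λ d(z))`:
`s_{𝔹ⁿ(z,d(z))}(x,y) ≤ ((1+2λ)/(2(1-λ))) · j_{𝔹ⁿ(z,d(z))}(x,y)`. -/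
theorem s_ball_le_mul_j_ball {n : ℕ}
    (G : Set (EuclideanSpace ℝ (Fin n)))
    (hGopen : IsOpen G) (hGconn : IsConnected G) (hGproper : G ≠ univ)
    (z : EuclideanSpace ℝ (Fin n)) (hz : z ∈ G)
    (hd : 0 < Metric.infDist z (frontier G))
    (lam : ℝ) (hlam0 : 0 < lam) (hlam1 : lam < 1)
    (x y : EuclideanSpace ℝ (Fin n))
    (hx : x ∈ Metric.ball z (lam * Metric.infDist z (frontier G)))
    (hy : y ∈ Metric.ball z (lam * Metric.infDist z (frontier G))) :
    triangularRatio (Metric.ball z (Metric.infDist z (frontier G))) x y ≤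
      ((1 + 2 * lam) / (2 * (1 - lam))) *
        distRatio (Metric.ball z (Metric.infDist z (frontier G))) x y :=
  s_ball_le_mul_j_ball_general G z hd lam hlam0 hlam1 x y hx hy
end

section
/- Let G ⊊ ℝⁿ be a proper subdomain, z ∈ G with d(z) = dist(z, ∂G) > 0, and 0 < λ < 1. Then for all x, y in the open ball 𝔹ⁿ(z, λ·d(z)), j_{𝔹ⁿ(z,d(z))}(x,y) ≤ (2(1+λ)/(1−λ)) · s_{𝔹ⁿ(z,d(z))}(x,y). -/
open Metric Set

/-- For a proper subdomain `G ⊊ ℝⁿ`, `z ∈ G` with `d(z) = dist(z,∂G) > 0`, `0 < λ < 1`,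
and all `x, y ∈ 𝔹ⁿ(z, λ d(z))`:
`j_{𝔹ⁿ(z,d(z))}(x,y) ≤ (2(1+λ)/(1-λ)) · s_{𝔹ⁿ(z,d(z))}(x,y)`. -/
theorem j_ball_le_mul_s_ball {n : ℕ}
    (G : Set (EuclideanSpace ℝ (Fin n)))
    (hGopen : IsOpen G) (hGconn : IsConnected G) (hGproper : G ≠ univ)
    (z : EuclideanSpace ℝ (Fin n)) (hz : z ∈ G)
    (hd : 0 < Metric.infDist z (frontier G))
    (lam : ℝ) (hlam0 : 0 < lam) (hlam1 : lam < 1)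
    (x y : EuclideanSpace ℝ (Fin n))
    (hx : x ∈ Metric.ball z (lam * Metric.infDist z (frontier G)))
    (hy : y ∈ Metric.ball z (lam * Metric.infDist z (frontier G))) :
    distRatio (Metric.ball z (Metric.infDist z (frontier G))) x y ≤
      (2 * (1 + lam) / (1 - lam)) *
        triangularRatio (Metric.ball z (Metric.infDist z (frontier G))) x y := by
  haveI : Nontrivial (EuclideanSpace ℝ (Fin n)) := by
    rcases subsingleton_or_nontrivial (EuclideanSpace ℝ (Fin n)) with h | h
    · obtain ⟨w, hw⟩ := (Set.ne_univ_iff_exists_notMem G).1 hGproper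
      exact absurd (Subsingleton.elim w z ▸ hz) hw
    · exact h
  set r := Metric.infDist z (frontier G) with hrdef
  have hfr : frontier (Metric.ball z r) = Metric.sphere z r := frontier_ball z hd.ne'
  have hsne : (Metric.sphere z r).Nonempty := NormedSpace.sphere_nonempty.2 hd.le
  obtain ⟨w, hw⟩ := hsne
  have hwz : dist w z = r := hw
  have hxz : dist x z < lam * r := mem_ball.1 hx
  have hyz : dist y z < lam * r := mem_ball.1 hy
  have hlr : 0 < (1 - lam) * r := mul_pos (by linarith) hd
  -- lower bound on distance to sphere for points in the small ball
  have key : ∀ u : EuclideanSpace ℝ (Fin n), dist u z < lam * r →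
      (1 - lam) * r ≤ distBd (Metric.ball z r) u := by
    intro u hu
    rw [distBd, hfr]
    by_contra hcon
    push_neg at hcon
    obtain ⟨v, hv, hdv⟩ := (Metric.infDist_lt_iff ⟨w, hw⟩).1 hcon
    have hvz : dist v z = r := hv
    have := dist_triangle v u z
    rw [dist_comm v u] at this
    nlinarith [dist_nonneg (x := u) (y := z)]
  have hdx := key x hxz
  have hdy := key y hyz
  set t := dist x y with htdef
  have ht : 0 ≤ t := dist_nonneg
  set m := min (distBd (Metric.ball z r) x) (distBd (Metric.ball z r) y) with hmdef
  have hm : (1 - lam) * r ≤ m := le_min hdx hdy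
  have hmpos : 0 < m := lt_of_lt_of_le hlr hm
  have hj : distRatio (Metric.ball z r) x y ≤ t / ((1 - lam) * r) := by
    rw [distRatio]
    have h1 : Real.log (1 + t / m) ≤ t / m := by
      have := Real.log_le_sub_one_of_pos (show 0 < 1 + t / m by positivity)
      linarith
    refine h1.trans ?_
    gcongr
  -- lower bound for the triangular ratio metric
  have hbdd : BddAbove (Set.range fun p : frontier (Metric.ball z r) =>
      t / (dist x p.1 + dist p.1 y)) := by
    refine ⟨1, ?_⟩
    rintro _ ⟨p, rfl⟩
    exact div_le_one_of_le₀ (dist_triangle x p.1 y) (by positivity)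
  have hwmem : w ∈ frontier (Metric.ball z r) := by rw [hfr]; exact hw
  have hws : t / (dist x w + dist w y) ≤ triangularRatio (Metric.ball z r) x y :=
    le_ciSup hbdd (⟨w, hwmem⟩ : frontier (Metric.ball z r))
  have hxw : dist x w ≤ (1 + lam) * r := by
    have := dist_triangle x z w
    rw [dist_comm z w] at this
    nlinarith
  have hwy : dist w y ≤ (1 + lam) * r := by
    have := dist_triangle w z y
    rw [dist_comm z y] at this
    nlinarith [dist_comm y z ▸ hyz]
  have hxwpos : 0 < dist x w := by
    have := dist_triangle z x w  -- r = dist z w ≤ dist z x + dist x w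
    rw [dist_comm w z] at hwz
    rw [dist_comm z x] at this
    nlinarith
  have hstep : t / (2 * (1 + lam) * r) ≤ t / (dist x w + dist w y) := by
    have hden : 0 < dist x w + dist w y := by
      linarith [dist_nonneg (x := w) (y := y)]
    gcongr
    linarith
  have hC : (0:ℝ) ≤ 2 * (1 + lam) / (1 - lam) := by
    apply div_nonneg <;> nlinarith
  calc distRatio (Metric.ball z r) x y ≤ t / ((1 - lam) * r) := hj
    _ = (2 * (1 + lam) / (1 - lam)) * (t / (2 * (1 + lam) * r)) := by
        have h1 : (1:ℝ) - lam ≠ 0 := by linarith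
        have h2 : (1:ℝ) + lam ≠ 0 := by linarith
        have h3 : r ≠ 0 := hd.ne'
        field_simp
    _ ≤ (2 * (1 + lam) / (1 - lam)) * triangularRatio (Metric.ball z r) x y :=
        mul_le_mul_of_nonneg_left (hstep.trans hws) hC
end

section
/- Let G ⊊ ℝⁿ be a proper subdomain, z ∈ G with d(z) = dist(z, ∂G) > 0, and 0 < λ < 1. Then for all x, y ∈ 𝔹ⁿ(z, λ·d(z)), j_G(x,y) ≤ (2/(1−λ)) · p_G(x,y). -/
/-!
Since `d_G` is 1-Lipschitz, `d_G(x) d_G(y) ≤ m (m + |x-y|)` with `m = min{d_G(x), d_G(y)}`, so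
`√(|x-y|² + 4 d_G(x) d_G(y)) ≤ |x-y| + 2m` and `p_G(x,y) ≥ |x-y| / (|x-y| + 2m)`. Together with
`log(1 + t) ≤ t` this gives `j_G(x,y) ≤ (2 + |x-y|/m) p_G(x,y)` whenever `m > 0`. In the ball
`𝔹ⁿ(z, λ d(z))` one has `m > (1-λ) d(z)` and `|x-y| < 2λ d(z)`, so `2 + |x-y|/m ≤ 2/(1-λ)`.
-/

open Metric Set

section infDist

variable {α : Type*} [PseudoMetricSpace α] {s : Set α} {x y z : α}

theorem one_sub_mul_infDist_lt_infDist_of_mem_ball {lam : ℝ}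
    (hx : x ∈ ball z (lam * infDist z s)) :
    (1 - lam) * infDist z s < infDist x s := by
  have := infDist_le_infDist_add_dist (s := s) (x := z) (y := x)
  rw [mem_ball, dist_comm] at hx
  linarith

theorem infDist_mul_infDist_le_min_mul :
    infDist x s * infDist y s ≤
      min (infDist x s) (infDist y s) * (min (infDist x s) (infDist y s) + dist x y) := by
  have hxy := infDist_le_infDist_add_dist (s := s) (x := x) (y := y)
  have hyx := infDist_le_infDist_add_dist (s := s) (x := y) (y := x)
  rw [dist_comm] at hyx
  rcases min_cases (infDist x s) (infDist y s) with ⟨hmin, -⟩ | ⟨hmin, -⟩ <;> rw [hmin]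
  · exact mul_le_mul_of_nonneg_left hyx infDist_nonneg
  · rw [mul_comm]; exact mul_le_mul_of_nonneg_left hxy infDist_nonneg

end infDist

section domain

variable {n : ℕ} (G : Set (EuclideanSpace ℝ (Fin n))) (x y : EuclideanSpace ℝ (Fin n))

theorem pMetric_nonneg : 0 ≤ pMetric G x y :=
  div_nonneg dist_nonneg (Real.sqrt_nonneg _)

theorem distRatio_le_dist_div_min : distRatio G x y ≤ dist x y / min (distBd G x) (distBd G y) := by
  have hm : 0 ≤ min (distBd G x) (distBd G y) := le_min infDist_nonneg infDist_nonneg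
  have := Real.log_le_sub_one_of_pos (x := 1 + dist x y / min (distBd G x) (distBd G y))
    (by positivity)
  rw [distRatio]
  linarith

theorem dist_div_add_two_min_le_pMetric (hm : 0 < min (distBd G x) (distBd G y)) :
    dist x y / (dist x y + 2 * min (distBd G x) (distBd G y)) ≤ pMetric G x y := by
  set m := min (distBd G x) (distBd G y)
  have hprod : distBd G x * distBd G y ≤ m * (m + dist x y) := infDist_mul_infDist_le_min_mul
  have hdx : 0 < distBd G x := hm.trans_le (min_le_left _ _)
  have hdy : 0 < distBd G y := hm.trans_le (min_le_right _ _)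
  have hsqrt : √(dist x y ^ 2 + 4 * distBd G x * distBd G y) ≤ dist x y + 2 * m :=
    Real.sqrt_le_iff.mpr ⟨by positivity, by nlinarith⟩
  exact div_le_div_of_nonneg_left dist_nonneg (by positivity) hsqrt

theorem distRatio_le_mul_pMetric (hm : 0 < min (distBd G x) (distBd G y)) :
    distRatio G x y ≤ (2 + dist x y / min (distBd G x) (distBd G y)) * pMetric G x y := by
  set m := min (distBd G x) (distBd G y)
  calc distRatio G x y ≤ dist x y / m := distRatio_le_dist_div_min G x y
    _ = (2 + dist x y / m) * (dist x y / (dist x y + 2 * m)) := by field_simp; ring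
    _ ≤ (2 + dist x y / m) * pMetric G x y := by
      gcongr
      exact dist_div_add_two_min_le_pMetric G x y hm

end domain

theorem jG_le_mul_pG_general {n : ℕ}
    (G : Set (EuclideanSpace ℝ (Fin n)))
    (z : EuclideanSpace ℝ (Fin n))
    (lam : ℝ) (hlam0 : 0 < lam) (hlam1 : lam < 1)
    (x y : EuclideanSpace ℝ (Fin n))
    (hx : x ∈ Metric.ball z (lam * Metric.infDist z (frontier G)))
    (hy : y ∈ Metric.ball z (lam * Metric.infDist z (frontier G))) :
    distRatio G x y ≤ (2 / (1 - lam)) * pMetric G x y := by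
  set d := infDist z (frontier G)
  set m := min (distBd G x) (distBd G y)
  have hm : (1 - lam) * d < m := lt_min (one_sub_mul_infDist_lt_infDist_of_mem_ball hx)
    (one_sub_mul_infDist_lt_infDist_of_mem_ball hy)
  have hm0 : 0 < m := (mul_nonneg (by linarith) infDist_nonneg).trans_lt hm
  have hxy : dist x y < 2 * lam * d := by
    linarith [dist_triangle_right x y z, mem_ball.mp hx, mem_ball.mp hy]
  have hratio : dist x y / m ≤ 2 * lam / (1 - lam) := by
    rw [div_le_div_iff₀ hm0 (by linarith)]
    nlinarith
  calc distRatio G x y ≤ (2 + dist x y / m) * pMetric G x y := distRatio_le_mul_pMetric G x y hm0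
    _ ≤ (2 + 2 * lam / (1 - lam)) * pMetric G x y := by gcongr; exact pMetric_nonneg G x y
    _ = 2 / (1 - lam) * pMetric G x y := by
      field_simp [(by linarith : (1 - lam) ≠ 0)]
      ring

/-- For a proper subdomain `G ⊊ ℝⁿ`, `z ∈ G` with `d(z) = dist(z,∂G) > 0`, `0 < λ < 1`,
and all `x, y ∈ 𝔹ⁿ(z, λ d(z))`: `j_G(x,y) ≤ (2/(1-λ)) · p_G(x,y)`. -/
theorem jG_le_mul_pG {n : ℕ}
    (G : Set (EuclideanSpace ℝ (Fin n)))
    (hGopen : IsOpen G) (hGconn : IsConnected G) (hGproper : G ≠ univ)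
    (z : EuclideanSpace ℝ (Fin n)) (hz : z ∈ G)
    (hd : 0 < Metric.infDist z (frontier G))
    (lam : ℝ) (hlam0 : 0 < lam) (hlam1 : lam < 1)
    (x y : EuclideanSpace ℝ (Fin n))
    (hx : x ∈ Metric.ball z (lam * Metric.infDist z (frontier G)))
    (hy : y ∈ Metric.ball z (lam * Metric.infDist z (frontier G))) :
    distRatio G x y ≤ (2 / (1 - lam)) * pMetric G x y :=
  jG_le_mul_pG_general G z lam hlam0 hlam1 x y hx hy
end

section
/- Let G ⊊ ℝⁿ be a proper subdomain, z ∈ G with d(z) = dist(z, ∂G) > 0, and 0 < λ < 1. Then for all x, y ∈ 𝔹ⁿ(z, λ·d(z)), s_G(x,y) ≤ ((1+λ)/(1−λ)) · p_G(x,y). -/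
open Metric Set

private lemma sqrt_aux (lam d dx dy r : ℝ) (hlam0 : 0 < lam) (hlam1 : lam < 1)
    (hd : 0 < d) (hdx : (1 - lam) * d < dx) (hdy : (1 - lam) * d < dy)
    (hr0 : 0 ≤ r) (hr : r ≤ 2 * (lam * d)) :
    Real.sqrt (r ^ 2 + 4 * dx * dy) ≤ (1 + lam) / (1 - lam) * (dx + dy) := by
  have hl1 : 0 < 1 - lam := by linarith
  have hdx0 : 0 < dx := lt_trans (by positivity) hdx
  have hdy0 : 0 < dy := lt_trans (by positivity) hdy
  rw [show (1 + lam) / (1 - lam) * (dx + dy)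
      = Real.sqrt (((1 + lam) / (1 - lam) * (dx + dy)) ^ 2) from
    (Real.sqrt_sq (by positivity)).symm]
  apply Real.sqrt_le_sqrt
  rw [mul_pow, div_pow, div_mul_eq_mul_div, le_div_iff₀ (by positivity)]
  have hrr : r * r ≤ (2 * (lam * d)) * (2 * (lam * d)) := mul_self_le_mul_self hr0 hr
  have hdd : ((1 - lam) * d) * ((1 - lam) * d) ≤ dx * dy :=
    mul_le_mul hdx.le hdy.le (by positivity) hdx0.le
  have key1 : r ^ 2 * (1 - lam) ^ 2 ≤ 4 * lam ^ 2 * d ^ 2 * (1 - lam) ^ 2 := by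
    nlinarith [sq_nonneg (1 - lam)]
  have key2 : 16 * lam * ((1 - lam) ^ 2 * d ^ 2) ≤ 16 * lam * (dx * dy) := by nlinarith
  have key3 : 4 * lam ^ 2 * d ^ 2 * (1 - lam) ^ 2 ≤ 16 * lam * ((1 - lam) ^ 2 * d ^ 2) := by
    nlinarith [mul_nonneg (mul_nonneg (mul_nonneg hlam0.le (sq_nonneg (1 - lam)))
      (sq_nonneg d)) (by linarith : (0:ℝ) ≤ 4 - lam)]
  nlinarith [mul_nonneg (sq_nonneg (1 + lam)) (sq_nonneg (dx - dy))]

/-- For a proper subdomain `G ⊊ ℝⁿ`, `z ∈ G` with `d(z) = dist(z,∂G) > 0`, `0 < λ < 1`,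
and all `x, y ∈ 𝔹ⁿ(z, λ d(z))`: `s_G(x,y) ≤ ((1+λ)/(1-λ)) · p_G(x,y)`. -/
theorem sG_le_mul_pG {n : ℕ}
    (G : Set (EuclideanSpace ℝ (Fin n)))
    (hGopen : IsOpen G) (hGconn : IsConnected G) (hGproper : G ≠ univ)
    (z : EuclideanSpace ℝ (Fin n)) (hz : z ∈ G)
    (hd : 0 < Metric.infDist z (frontier G))
    (lam : ℝ) (hlam0 : 0 < lam) (hlam1 : lam < 1)
    (x y : EuclideanSpace ℝ (Fin n))
    (hx : x ∈ Metric.ball z (lam * Metric.infDist z (frontier G)))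
    (hy : y ∈ Metric.ball z (lam * Metric.infDist z (frontier G))) :
    triangularRatio G x y ≤ ((1 + lam) / (1 - lam)) * pMetric G x y := by
  set d := Metric.infDist z (frontier G) with hdDef
  have hfr : (frontier G).Nonempty := nonempty_frontier_iff.mpr ⟨⟨z, hz⟩, hGproper⟩
  have : Nonempty (frontier G) := hfr.to_subtype
  have hxz : dist x z < lam * d := hx
  have hyz : dist y z < lam * d := hy
  have hdx : (1 - lam) * d < distBd G x := by
    have h1 : d ≤ Metric.infDist x (frontier G) + dist z x :=
      Metric.infDist_le_infDist_add_dist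
    rw [dist_comm] at h1
    have : distBd G x = Metric.infDist x (frontier G) := rfl
    nlinarith
  have hdy : (1 - lam) * d < distBd G y := by
    have h1 : d ≤ Metric.infDist y (frontier G) + dist z y :=
      Metric.infDist_le_infDist_add_dist
    rw [dist_comm] at h1
    have h2 : distBd G y = Metric.infDist y (frontier G) := rfl
    nlinarith
  have hl1 : 0 < 1 - lam := by linarith
  have hdx0 : 0 < distBd G x := lt_trans (by positivity) hdx
  have hdy0 : 0 < distBd G y := lt_trans (by positivity) hdy
  have hr : dist x y ≤ 2 * (lam * d) := by
    have := dist_triangle x z y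
    rw [dist_comm z y] at this
    linarith
  set C := (1 + lam) / (1 - lam) with hC
  have hC1 : 1 ≤ C := (le_div_iff₀ hl1).mpr (by linarith)
  have hC0 : 0 < C := lt_of_lt_of_le one_pos hC1
  set B := dist x y ^ 2 + 4 * distBd G x * distBd G y with hB
  have hB0 : 0 < B := by positivity
  have hsqB : Real.sqrt B ≤ C * (distBd G x + distBd G y) :=
    sqrt_aux lam d (distBd G x) (distBd G y) (dist x y) hlam0 hlam1 hd hdx hdy dist_nonneg hr
  have key : ∀ w : frontier G,
      dist x y / (dist x w.1 + dist w.1 y) ≤ C * pMetric G x y := by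
    intro w
    have hwx : distBd G x ≤ dist x w.1 := Metric.infDist_le_dist_of_mem w.2
    have hwy : distBd G y ≤ dist y w.1 := Metric.infDist_le_dist_of_mem w.2
    rw [dist_comm y w.1] at hwy
    have hden : 0 < dist x w.1 + dist w.1 y := by linarith
    have hsq : 0 < Real.sqrt B := Real.sqrt_pos.mpr hB0
    have hchain : Real.sqrt B ≤ C * (dist x w.1 + dist w.1 y) :=
      hsqB.trans (by nlinarith)
    rw [pMetric, ← hB, mul_div_assoc']
    rw [div_le_div_iff₀ hden hsq]
    nlinarith [dist_nonneg (x := x) (y := y),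
      mul_le_mul_of_nonneg_left hchain (dist_nonneg (x := x) (y := y))]
  exact ciSup_le key
end

section
/- For all x, y ∈ 𝔹ⁿ (the open unit ball of ℝⁿ), |x−y|/√(|x−y|² + (1−|x|²)(1−|y|²)) ≤ 2·s_{𝔹ⁿ}(x,y). (The left-hand side equals tanh(ρ_{𝔹ⁿ}(x,y)/2), where ρ_{𝔹ⁿ} is the hyperbolic metric of the unit ball.) -/
open Metric Set

open RealInnerProductSpace
set_option maxHeartbeats 1000000

lemma key (a b s t : ℝ) (ha : 0 ≤ a) (ha1 : a ≤ 1) (hb : 0 ≤ b) (hb1 : b ≤ 1)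
    (hs : 0 ≤ s) (hsab : s ≤ a + b) (hpar : s^2 + t^2 = 2*a^2 + 2*b^2) :
    2*(a^2 + b^2 + 2 - 2*s) ≤ 4*(t^2 + (1-a^2)*(1-b^2)) := by
  have h : 2*s^2 - 2*s ≤ a^2 + b^2 + 2*a^2*b^2 := by
    rcases le_or_gt s 1 with h1 | h1
    · nlinarith [mul_nonneg hs (sub_nonneg.2 h1), sq_nonneg a, sq_nonneg (a*b)]
    · have hu : 0 ≤ 1 - a := by linarith
      have hv : 0 ≤ 1 - b := by linarith
      nlinarith [mul_nonneg (sub_nonneg.2 hsab) (le_of_lt (sub_pos.2 h1)),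
        mul_nonneg (add_nonneg ha hb) (sub_nonneg.2 hsab),
        mul_nonneg (mul_nonneg hu hv) (by linarith : (0:ℝ) ≤ a + b - 1),
        sq_nonneg (a - b), sq_nonneg ((1-a)*(1-b)), mul_nonneg hu hv]
  nlinarith [h, hpar]


/-- For all `x, y` in the unit ball `𝔹ⁿ`,
`tanh(ρ_{𝔹ⁿ}(x,y)/2) = |x-y|/√(|x-y|² + (1-|x|²)(1-|y|²)) ≤ 2 s_{𝔹ⁿ}(x,y)`. -/
theorem tanh_half_rho_le_two_sB {n : ℕ}
    (x y : EuclideanSpace ℝ (Fin n)) (hx : ‖x‖ < 1) (hy : ‖y‖ < 1) :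
    ‖x - y‖ / Real.sqrt (‖x - y‖ ^ 2 + (1 - ‖x‖ ^ 2) * (1 - ‖y‖ ^ 2)) ≤
      2 * triangularRatio (Metric.ball (0 : EuclideanSpace ℝ (Fin n)) 1) x y := by
  have htri_nonneg : 0 ≤ triangularRatio (Metric.ball (0 : EuclideanSpace ℝ (Fin n)) 1) x y :=
    Real.iSup_nonneg fun z => div_nonneg dist_nonneg (add_nonneg dist_nonneg dist_nonneg)
  rcases eq_or_ne x y with rfl | hxy
  · simp only [sub_self, norm_zero, zero_div]
    linarith
  -- choose the boundary point u
  obtain ⟨u, hu1, hu2⟩ : ∃ u : EuclideanSpace ℝ (Fin n), ‖u‖ = 1 ∧ ⟪x + y, u⟫ = ‖x + y‖ := by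
    rcases eq_or_ne (x + y) 0 with h0 | h0
    · have hx0 : x ≠ 0 := by
        intro h
        apply hxy
        rw [h] at h0 ⊢
        rw [zero_add] at h0
        exact h0.symm
      refine ⟨‖x‖⁻¹ • x, ?_, ?_⟩
      · rw [norm_smul, norm_inv, norm_norm, inv_mul_cancel₀ (norm_ne_zero_iff.2 hx0)]
      · rw [h0]
        simp
    · refine ⟨‖x + y‖⁻¹ • (x + y), ?_, ?_⟩
      · rw [norm_smul, norm_inv, norm_norm, inv_mul_cancel₀ (norm_ne_zero_iff.2 h0)]
      · have hn : ‖x + y‖ ≠ 0 := norm_ne_zero_iff.2 h0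
        rw [real_inner_smul_right, real_inner_self_eq_norm_sq, pow_two, ← mul_assoc,
          inv_mul_cancel₀ hn, one_mul]
  have ht : 0 < ‖x - y‖ := by
    rw [norm_pos_iff, sub_ne_zero]; exact hxy
  -- geometric identity
  have hgeo : ‖x - u‖^2 + ‖u - y‖^2 = ‖x‖^2 + ‖y‖^2 + 2 - 2*‖x + y‖ := by
    have h1 : ‖x - u‖^2 = ‖x‖^2 - 2*⟪x, u⟫ + ‖u‖^2 := norm_sub_sq_real x u
    have h2 : ‖u - y‖^2 = ‖u‖^2 - 2*⟪u, y⟫ + ‖y‖^2 := norm_sub_sq_real u y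
    have h3 : ⟪x, u⟫ + ⟪u, y⟫ = ‖x + y‖ := by
      rw [real_inner_comm y u, ← inner_add_left]
      exact hu2
    rw [h1, h2, hu1]
    nlinarith [h3]
  -- parallelogram law
  have hpar : ‖x + y‖^2 + ‖x - y‖^2 = 2*‖x‖^2 + 2*‖y‖^2 := by
    have := parallelogram_law_with_norm ℝ x y
    nlinarith [this]
  have hkey := key ‖x‖ ‖y‖ ‖x + y‖ ‖x - y‖ (norm_nonneg x) hx.le (norm_nonneg y) hy.le
    (norm_nonneg _) (norm_add_le x y) hpar
  -- denominator bound
  set D : ℝ := ‖x - y‖ ^ 2 + (1 - ‖x‖ ^ 2) * (1 - ‖y‖ ^ 2) with hD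
  clear_value D
  have h1 : 0 < 1 - ‖x‖ ^ 2 := by nlinarith [norm_nonneg x]
  have h2 : 0 < 1 - ‖y‖ ^ 2 := by nlinarith [norm_nonneg y]
  have hDpos : 0 < D := by nlinarith [mul_pos h1 h2, sq_nonneg ‖x - y‖]
  have hden : ‖x - y‖ ≤ ‖x - u‖ + ‖u - y‖ := by
    have hxy' : x - y = (x - u) + (u - y) := by abel
    rw [hxy']
    exact norm_add_le _ _
  have hdenpos : 0 < ‖x - u‖ + ‖u - y‖ := lt_of_lt_of_le ht hden
  have hsq : (‖x - u‖ + ‖u - y‖)^2 ≤ 4 * D := by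
    nlinarith [sq_nonneg (‖x - u‖ - ‖u - y‖), hgeo, hkey, hD]
  have hsqrtpos : 0 < Real.sqrt D := Real.sqrt_pos.2 hDpos
  have hden2 : ‖x - u‖ + ‖u - y‖ ≤ 2 * Real.sqrt D := by
    have h4 : Real.sqrt (4 * D) = 2 * Real.sqrt D := by
      rw [show (4:ℝ) * D = (2 * Real.sqrt D)^2 by
        rw [mul_pow, Real.sq_sqrt hDpos.le]; ring]
      exact Real.sqrt_sq (by positivity)
    calc ‖x - u‖ + ‖u - y‖ = Real.sqrt ((‖x - u‖ + ‖u - y‖)^2) :=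
          (Real.sqrt_sq hdenpos.le).symm
      _ ≤ Real.sqrt (4 * D) := Real.sqrt_le_sqrt hsq
      _ = 2 * Real.sqrt D := h4
  -- compare with the supremum term
  have hzmem : u ∈ frontier (Metric.ball (0 : EuclideanSpace ℝ (Fin n)) 1) := by
    rw [frontier_ball (0 : EuclideanSpace ℝ (Fin n)) one_ne_zero]
    simpa [mem_sphere_zero_iff_norm] using hu1
  have hterm : dist x y / (dist x u + dist u y) ≤
      triangularRatio (Metric.ball (0 : EuclideanSpace ℝ (Fin n)) 1) x y := by
    have hbdd : BddAbove (Set.range fun z : frontier (Metric.ball (0 : EuclideanSpace ℝ (Fin n)) 1) =>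
        dist x y / (dist x z.1 + dist z.1 y)) := by
      refine ⟨1, ?_⟩
      rintro _ ⟨z, rfl⟩
      have h1 : dist x y ≤ dist x z.1 + dist z.1 y := dist_triangle x z.1 y
      rcases le_or_gt (dist x z.1 + dist z.1 y) 0 with h2 | h2
      · have : dist x z.1 + dist z.1 y = 0 :=
          le_antisymm h2 (add_nonneg dist_nonneg dist_nonneg)
        simp [this]
      · rw [div_le_one h2]; exact h1
    exact le_ciSup hbdd (⟨u, hzmem⟩ : frontier (Metric.ball (0 : EuclideanSpace ℝ (Fin n)) 1))
  have hmain : ‖x - y‖ / Real.sqrt D ≤ 2 * (dist x y / (dist x u + dist u y)) := by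
    rw [dist_eq_norm, dist_eq_norm, dist_eq_norm, div_le_iff₀ hsqrtpos]
    have hrw : 2 * (‖x - y‖ / (‖x - u‖ + ‖u - y‖)) * Real.sqrt D =
        ‖x - y‖ * (2 * Real.sqrt D) / (‖x - u‖ + ‖u - y‖) := by
      field_simp
    rw [hrw, le_div_iff₀ hdenpos]
    exact mul_le_mul_of_nonneg_left hden2 ht.le
  calc ‖x - y‖ / Real.sqrt D ≤ 2 * (dist x y / (dist x u + dist u y)) := hmain
    _ ≤ 2 * triangularRatio (Metric.ball (0 : EuclideanSpace ℝ (Fin n)) 1) x y := by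
        linarith [hterm]
end

section
/- Let 𝔻 = {z ∈ ℂ : |z| < 1} be the open unit disk, let a ∈ 𝔻, and let T_a : 𝔻 → 𝔻 be the Möbius transformation T_a(z) = (z − a)/(1 − ā·z), which maps 𝔻 onto itself and sends a to 0. Then for all distinct x, y ∈ 𝔻, ((1−|a|)/(1+|a|)) · s_𝔻(x,y) ≤ s_𝔻(T_a(x), T_a(y)) ≤ ((1+|a|)/(1−|a|)) · s_𝔻(x,y). -/
/-!
`T_a(z) = (z - a)/(1 - ā z)` satisfies `|T_a x - T_a y| = (1 - |a|²)|x - y| / (|1 - ā x||1 - ā y|)`,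
and every factor `|1 - ā w|` with `|w| ≤ 1` lies in `[1 - |a|, 1 + |a|]`. For `z` on the unit
circle the ratio `|x - y|/(|x - z| + |z - y|)` is therefore changed by `T_a` by a factor in
`[(1 - |a|)/(1 + |a|), (1 + |a|)/(1 - |a|)]`. Since `T_a` permutes the unit circle, which is the
boundary of the disk, the same bounds pass to the suprema.
-/

open Metric Set

/-- The triangular ratio metric in the plane:
`s_G(x,y) = sup_{z ∈ ∂G} |x-y|/(|x-z|+|z-y|)`. -/
noncomputable def triangularRatioC (G : Set ℂ) (x y : ℂ) : ℝ :=
  ⨆ z : frontier G, dist x y / (dist x z.1 + dist z.1 y)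

open ComplexConjugate

noncomputable def diskMoebius (a z : ℂ) : ℂ := (z - a) / (1 - conj a * z)

section Denominator

variable {a z : ℂ}

lemma one_sub_norm_le_norm_one_sub_conj_mul (hz : ‖z‖ ≤ 1) : 1 - ‖a‖ ≤ ‖1 - conj a * z‖ := by
  have h := norm_sub_norm_le (1 : ℂ) (conj a * z)
  rw [norm_mul, Complex.norm_conj, norm_one] at h
  nlinarith [norm_nonneg a]

lemma norm_one_sub_conj_mul_le (hz : ‖z‖ ≤ 1) : ‖1 - conj a * z‖ ≤ 1 + ‖a‖ := by
  have h := norm_sub_le (1 : ℂ) (conj a * z)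
  rw [norm_mul, Complex.norm_conj, norm_one] at h
  nlinarith [norm_nonneg a]

lemma norm_one_sub_conj_mul_pos (ha : ‖a‖ < 1) (hz : ‖z‖ ≤ 1) : 0 < ‖1 - conj a * z‖ := by
  linarith [one_sub_norm_le_norm_one_sub_conj_mul (a := a) hz]

lemma one_sub_conj_mul_ne_zero (ha : ‖a‖ < 1) (hz : ‖z‖ ≤ 1) : 1 - conj a * z ≠ 0 :=
  norm_pos_iff.mp (norm_one_sub_conj_mul_pos ha hz)

lemma norm_one_sub_conj_mul_self (ha : ‖a‖ ≤ 1) : ‖1 - conj a * a‖ = 1 - ‖a‖ ^ 2 := by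
  rw [Complex.conj_mul', ← Complex.ofReal_pow, ← Complex.ofReal_one, ← Complex.ofReal_sub,
    Complex.norm_real, Real.norm_of_nonneg (by nlinarith [norm_nonneg a])]

lemma norm_one_sub_conj_mul_eq_norm_sub (hz : ‖z‖ = 1) : ‖1 - conj a * z‖ = ‖z - a‖ := by
  have h : 1 - conj a * z = conj (z - a) * z := by
    rw [map_sub, sub_mul, Complex.conj_mul', hz]
    simp
  rw [h, norm_mul, Complex.norm_conj, hz, mul_one]

end Denominator

section Moebius

variable {a x y z w : ℂ}

lemma diskMoebius_sub_diskMoebius (hx : 1 - conj a * x ≠ 0) (hy : 1 - conj a * y ≠ 0) :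
    diskMoebius a x - diskMoebius a y =
      (1 - conj a * a) * (x - y) / ((1 - conj a * x) * (1 - conj a * y)) := by
  rw [diskMoebius, diskMoebius, div_sub_div _ _ hx hy]
  ring

lemma dist_diskMoebius (ha : ‖a‖ < 1) (hx : ‖x‖ ≤ 1) (hy : ‖y‖ ≤ 1) :
    dist (diskMoebius a x) (diskMoebius a y) =
      (1 - ‖a‖ ^ 2) * dist x y / (‖1 - conj a * x‖ * ‖1 - conj a * y‖) := by
  rw [dist_eq_norm, dist_eq_norm, diskMoebius_sub_diskMoebius (one_sub_conj_mul_ne_zero ha hx)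
    (one_sub_conj_mul_ne_zero ha hy), norm_div, norm_mul, norm_mul,
    norm_one_sub_conj_mul_self ha.le]

lemma norm_diskMoebius_of_norm_eq_one (ha : ‖a‖ < 1) (hz : ‖z‖ = 1) : ‖diskMoebius a z‖ = 1 := by
  rw [diskMoebius, norm_div, ← norm_one_sub_conj_mul_eq_norm_sub hz,
    div_self (norm_one_sub_conj_mul_pos ha hz.le).ne']

lemma diskMoebius_diskMoebius_neg (ha : ‖a‖ < 1) (hw : ‖w‖ ≤ 1) :
    diskMoebius a (diskMoebius (-a) w) = w := by
  have hu : 1 + conj a * w ≠ 0 := by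
    simpa using one_sub_conj_mul_ne_zero (a := -a) (by rwa [norm_neg]) hw
  have hK := one_sub_conj_mul_ne_zero ha ha.le
  have hden : 1 - conj a * ((w + a) / (1 + conj a * w)) = (1 - conj a * a) / (1 + conj a * w) := by
    field_simp
    ring
  have hneg : diskMoebius (-a) w = (w + a) / (1 + conj a * w) := by
    simp only [diskMoebius, map_neg, sub_neg_eq_add, neg_mul]
  rw [hneg, diskMoebius, hden, div_eq_iff (div_ne_zero hK hu), div_sub' hu, mul_div_assoc',
    div_left_inj' hu]
  ring

lemma mapsTo_diskMoebius_sphere (ha : ‖a‖ < 1) :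
    MapsTo (diskMoebius a) (sphere 0 1) (sphere 0 1) := fun _ hz =>
  mem_sphere_zero_iff_norm.mpr (norm_diskMoebius_of_norm_eq_one ha (mem_sphere_zero_iff_norm.mp hz))

lemma surjOn_diskMoebius_sphere (ha : ‖a‖ < 1) :
    SurjOn (diskMoebius a) (sphere 0 1) (sphere 0 1) := fun w hw =>
  ⟨diskMoebius (-a) w, mapsTo_diskMoebius_sphere (by rwa [norm_neg]) hw,
    diskMoebius_diskMoebius_neg ha (mem_sphere_zero_iff_norm.mp hw).le⟩

lemma div_weighted_sum_bounds {m d A B Dx Dy Dz : ℝ} (hm1 : m < 1) (hA : 0 ≤ A) (hB : 0 ≤ B)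
    (hd : 0 ≤ d) (hdAB : d ≤ A + B)
    (hDx : 1 - m ≤ Dx ∧ Dx ≤ 1 + m) (hDy : 1 - m ≤ Dy ∧ Dy ≤ 1 + m)
    (hDz : 1 - m ≤ Dz ∧ Dz ≤ 1 + m) :
    (1 - m) / (1 + m) * (d / (A + B)) ≤ d * Dz / (A * Dy + B * Dx) ∧
      d * Dz / (A * Dy + B * Dx) ≤ (1 + m) / (1 - m) * (d / (A + B)) := by
  have hm : 0 ≤ m := by linarith [hDx.1, hDx.2]
  rcases (add_nonneg hA hB).eq_or_lt with hS | hS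
  · simp [show d = 0 by linarith]
  have hlow : (1 - m) * (A + B) ≤ A * Dy + B * Dx := by nlinarith
  have hup : A * Dy + B * Dx ≤ (1 + m) * (A + B) := by nlinarith
  have hpos : 0 < A * Dy + B * Dx := lt_of_lt_of_le (by nlinarith) hlow
  constructor
  · calc (1 - m) / (1 + m) * (d / (A + B)) = d * (1 - m) / ((1 + m) * (A + B)) := by
          rw [div_mul_div_comm, mul_comm (1 - m)]
      _ ≤ d * Dz / (A * Dy + B * Dx) := by
          gcongr
          · nlinarith [hDz.1]
          · exact hDz.1
  · calc d * Dz / (A * Dy + B * Dx) ≤ d * (1 + m) / ((1 - m) * (A + B)) := by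
          gcongr
          exact hDz.2
      _ = (1 + m) / (1 - m) * (d / (A + B)) := by rw [div_mul_div_comm, mul_comm (1 + m)]

lemma diskMoebius_triangle_ratio (ha : ‖a‖ < 1) (hx : ‖x‖ ≤ 1) (hy : ‖y‖ ≤ 1) (hz : ‖z‖ ≤ 1) :
    dist (diskMoebius a x) (diskMoebius a y) /
        (dist (diskMoebius a x) (diskMoebius a z) + dist (diskMoebius a z) (diskMoebius a y)) =
      dist x y * ‖1 - conj a * z‖ /
        (dist x z * ‖1 - conj a * y‖ + dist z y * ‖1 - conj a * x‖) := by
  rw [dist_diskMoebius ha hx hy, dist_diskMoebius ha hx hz, dist_diskMoebius ha hz hy]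
  have hK : 0 < 1 - ‖a‖ ^ 2 := by nlinarith [norm_nonneg a]
  have hDx := norm_one_sub_conj_mul_pos ha hx
  have hDy := norm_one_sub_conj_mul_pos ha hy
  have hDz := norm_one_sub_conj_mul_pos ha hz
  generalize 1 - ‖a‖ ^ 2 = K at *
  generalize ‖1 - conj a * x‖ = Dx at *
  generalize ‖1 - conj a * y‖ = Dy at *
  generalize ‖1 - conj a * z‖ = Dz at *
  have hsum : K * dist x z / (Dx * Dz) + K * dist z y / (Dz * Dy) =
      K / (Dx * Dy * Dz) * (dist x z * Dy + dist z y * Dx) := by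
    field_simp
  rw [hsum, div_mul_eq_div_div]
  congr 1
  field_simp

lemma diskMoebius_triangle_ratio_bounds (ha : ‖a‖ < 1) (hx : ‖x‖ ≤ 1) (hy : ‖y‖ ≤ 1)
    (hz : ‖z‖ ≤ 1) :
    (1 - ‖a‖) / (1 + ‖a‖) * (dist x y / (dist x z + dist z y)) ≤
        dist (diskMoebius a x) (diskMoebius a y) /
          (dist (diskMoebius a x) (diskMoebius a z) + dist (diskMoebius a z) (diskMoebius a y)) ∧
      dist (diskMoebius a x) (diskMoebius a y) /
          (dist (diskMoebius a x) (diskMoebius a z) + dist (diskMoebius a z) (diskMoebius a y)) ≤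
        (1 + ‖a‖) / (1 - ‖a‖) * (dist x y / (dist x z + dist z y)) := by
  rw [diskMoebius_triangle_ratio ha hx hy hz]
  exact div_weighted_sum_bounds ha dist_nonneg dist_nonneg dist_nonneg (dist_triangle x z y)
    ⟨one_sub_norm_le_norm_one_sub_conj_mul hx, norm_one_sub_conj_mul_le hx⟩
    ⟨one_sub_norm_le_norm_one_sub_conj_mul hy, norm_one_sub_conj_mul_le hy⟩
    ⟨one_sub_norm_le_norm_one_sub_conj_mul hz, norm_one_sub_conj_mul_le hz⟩

end Moebius

lemma ciSup_bounds_of_surjective {ι κ : Type*} [Nonempty ι] {f : ι → ℝ} {g : κ → ℝ} {φ : ι → κ}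
    (hφ : φ.Surjective) (hf : BddAbove (range f)) (hg : BddAbove (range g)) {c C : ℝ}
    (hc : 0 ≤ c) (hC : 0 ≤ C) (h : ∀ i, c * f i ≤ g (φ i) ∧ g (φ i) ≤ C * f i) :
    c * ⨆ i, f i ≤ ⨆ j, g j ∧ ⨆ j, g j ≤ C * ⨆ i, f i := by
  have : Nonempty κ := .map φ ‹_›
  constructor
  · rw [Real.mul_iSup_of_nonneg hc]
    exact ciSup_le fun i => (h i).1.trans (le_ciSup hg (φ i))
  · refine ciSup_le fun j => ?_
    obtain ⟨i, rfl⟩ := hφ j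
    exact (h i).2.trans (mul_le_mul_of_nonneg_left (le_ciSup hf i) hC)

lemma bddAbove_range_triangle_ratio {α : Type*} [PseudoMetricSpace α] (x y : α) (s : Set α) :
    BddAbove (range fun z : s => dist x y / (dist x z + dist (z : α) y)) :=
  ⟨1, by
    rintro _ ⟨z, rfl⟩
    exact div_le_one_of_le₀ (dist_triangle x z y) (by positivity)⟩

lemma triangularRatioC_ball_eq_iSup_sphere (x y : ℂ) :
    triangularRatioC (ball 0 1) x y =
      ⨆ z : sphere (0 : ℂ) 1, dist x y / (dist x z + dist (z : ℂ) y) := by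
  rw [triangularRatioC, frontier_ball (0 : ℂ) one_ne_zero]

theorem s_disk_moebius_bilipschitz_general (a : ℂ) (ha : ‖a‖ < 1)
    (x y : ℂ) (hx : x ∈ Metric.ball (0 : ℂ) 1) (hy : y ∈ Metric.ball (0 : ℂ) 1) :
    ((1 - ‖a‖) / (1 + ‖a‖)) * triangularRatioC (Metric.ball (0 : ℂ) 1) x y ≤
        triangularRatioC (Metric.ball (0 : ℂ) 1)
          ((x - a) / (1 - (starRingEnd ℂ) a * x)) ((y - a) / (1 - (starRingEnd ℂ) a * y)) ∧
      triangularRatioC (Metric.ball (0 : ℂ) 1)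
          ((x - a) / (1 - (starRingEnd ℂ) a * x)) ((y - a) / (1 - (starRingEnd ℂ) a * y)) ≤
        ((1 + ‖a‖) / (1 - ‖a‖)) * triangularRatioC (Metric.ball (0 : ℂ) 1) x y := by
  have hx' : ‖x‖ ≤ 1 := (mem_ball_zero_iff.mp hx).le
  have hy' : ‖y‖ ≤ 1 := (mem_ball_zero_iff.mp hy).le
  have : Nonempty (sphere (0 : ℂ) 1) := ⟨⟨1, by simp⟩⟩
  have hsurj := (mapsTo_diskMoebius_sphere ha).restrict_surjective_iff.mpr
    (surjOn_diskMoebius_sphere ha)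
  simp only [triangularRatioC_ball_eq_iSup_sphere]
  refine ciSup_bounds_of_surjective hsurj (bddAbove_range_triangle_ratio _ _ _)
    (bddAbove_range_triangle_ratio _ _ _) ?_ ?_ fun z =>
      diskMoebius_triangle_ratio_bounds ha hx' hy' (mem_sphere_zero_iff_norm.mp z.2).le
  · exact div_nonneg (by linarith) (by positivity)
  · exact div_nonneg (by positivity) (by linarith)

/-- For the Möbius self-map `T_a(z) = (z-a)/(1-ā z)` of the unit disk 𝔻 and all distinct
`x, y ∈ 𝔻`:
`((1-|a|)/(1+|a|)) s_𝔻(x,y) ≤ s_𝔻(T_a x, T_a y) ≤ ((1+|a|)/(1-|a|)) s_𝔻(x,y)`. -/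
theorem s_disk_moebius_bilipschitz (a : ℂ) (ha : ‖a‖ < 1)
    (x y : ℂ) (hx : x ∈ Metric.ball (0 : ℂ) 1) (hy : y ∈ Metric.ball (0 : ℂ) 1) (hxy : x ≠ y) :
    ((1 - ‖a‖) / (1 + ‖a‖)) * triangularRatioC (Metric.ball (0 : ℂ) 1) x y ≤
        triangularRatioC (Metric.ball (0 : ℂ) 1)
          ((x - a) / (1 - (starRingEnd ℂ) a * x)) ((y - a) / (1 - (starRingEnd ℂ) a * y)) ∧
      triangularRatioC (Metric.ball (0 : ℂ) 1)
          ((x - a) / (1 - (starRingEnd ℂ) a * x)) ((y - a) / (1 - (starRingEnd ℂ) a * y)) ≤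
        ((1 + ‖a‖) / (1 - ‖a‖)) * triangularRatioC (Metric.ball (0 : ℂ) 1) x y :=
  s_disk_moebius_bilipschitz_general a ha x y hx hy
end

section
/- Let 𝔻 = {z ∈ ℂ : |z| < 1} be the open unit disk, let a ∈ (0,1), and let h : 𝔻 → 𝔻 be the Möbius transformation h(z) = (z + a)/(1 + a·z), so that h(0) = a. Then for every ε > 0 there exist distinct points x, y ∈ 𝔻 with s_𝔻(h(x), h(y)) > (1 + a − ε) · s_𝔻(x,y). (Indeed, taking x = 0 and y = 1/(1 + v(1+a)) for v > 0, the ratio s_𝔻(h(x),h(y))/s_𝔻(x,y) equals (1 + 2v(1+a))/(1 + 2v), which tends to 1 + a as v → ∞.) Consequently L(a) = sup{ s_𝔻(g(x),g(y))/s_𝔻(x,y) : x ≠ y in 𝔻, g a Möbius self-map of 𝔻 with |g(0)| = a } satisfies L(a) ≥ 1 + a. -/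
/-!
Take `x = 0` and `y = r` with `r ∈ (0, 1)`. The Möbius map keeps the real diameter, sending
`0 ↦ a` and `r ↦ t = (r + a)/(1 + a r)`, and on a radius `0 ≤ p ≤ q ≤ 1` the supremum
defining `s_𝔻(p, q)` is attained at the boundary point `1`, so `s_𝔻(p, q) = (q - p)/(2 - p - q)`.
Hence `s_𝔻(a, t) / s_𝔻(0, r) = (1 + a)(2 - r)/(2 - (1 - a) r)`, which tends to `1 + a`
as `r → 0⁺`.
-/

open Metric Set

open Filter Topology

theorem triangularRatioC_eq_of_forall_le {G : Set ℂ} {x y z₀ : ℂ} (hz₀ : z₀ ∈ frontier G)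
    (hmin : ∀ z ∈ frontier G, dist x z₀ + dist z₀ y ≤ dist x z + dist z y) :
    triangularRatioC G x y = dist x y / (dist x z₀ + dist z₀ y) := by
  have : Nonempty (frontier G) := ⟨⟨z₀, hz₀⟩⟩
  have hle : ∀ z : frontier G,
      dist x y / (dist x z.1 + dist z.1 y) ≤ dist x y / (dist x z₀ + dist z₀ y) := by
    intro z
    rcases (dist_nonneg : 0 ≤ dist x y).eq_or_lt with hxy | hxy
    · simp [← hxy]
    · exact div_le_div_of_nonneg_left dist_nonneg (hxy.trans_le (dist_triangle x z₀ y))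
        (hmin z.1 z.2)
  exact le_antisymm (ciSup_le hle) (le_ciSup ⟨_, forall_mem_range.2 hle⟩ ⟨z₀, hz₀⟩)

theorem dist_ofReal_one {p : ℝ} (hp : p ≤ 1) : dist (p : ℂ) 1 = 1 - p := by
  rw [Complex.dist_eq, ← Complex.ofReal_one, ← Complex.ofReal_sub, Complex.norm_real,
    Real.norm_of_nonpos (by linarith)]
  ring

theorem one_sub_le_dist_ofReal_of_norm_eq_one {p : ℝ} (hp : 0 ≤ p) {z : ℂ} (hz : ‖z‖ = 1) :
    1 - p ≤ dist (p : ℂ) z := by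
  have := norm_sub_norm_le z (p : ℂ)
  rwa [hz, Complex.norm_real, Real.norm_of_nonneg hp, ← dist_eq_norm, dist_comm] at this

theorem triangularRatioC_ball_ofReal {p q : ℝ} (hp : 0 ≤ p) (hpq : p ≤ q) (hq : q ≤ 1) :
    triangularRatioC (ball 0 1) p q = (q - p) / (2 - p - q) := by
  have hsum : dist (p : ℂ) 1 + dist 1 (q : ℂ) = 2 - p - q := by
    rw [dist_comm 1, dist_ofReal_one (hpq.trans hq), dist_ofReal_one hq]
    ring
  have hfrontier : frontier (ball (0 : ℂ) 1) = sphere 0 1 := frontier_ball 0 one_ne_zero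
  rw [triangularRatioC_eq_of_forall_le (z₀ := 1) (by simp [hfrontier]), hsum,
    Complex.dist_eq, ← Complex.ofReal_sub, Complex.norm_real, Real.norm_of_nonpos (by linarith),
    neg_sub]
  intro z hz
  rw [hfrontier, mem_sphere_zero_iff_norm] at hz
  rw [hsum, dist_comm z]
  linarith [one_sub_le_dist_ofReal_of_norm_eq_one hp hz,
    one_sub_le_dist_ofReal_of_norm_eq_one (hp.trans hpq) hz]

theorem triangularRatioC_ball_zero_ofReal {r : ℝ} (hr0 : 0 ≤ r) (hr1 : r ≤ 1) :
    triangularRatioC (ball 0 1) 0 r = r / (2 - r) := by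
  simpa using triangularRatioC_ball_ofReal le_rfl hr0 hr1

theorem moebius_ofReal (a r : ℝ) :
    ((r : ℂ) + a) / (1 + a * r) = ((r + a) / (1 + a * r) : ℝ) := by
  push_cast
  rfl

theorem triangularRatioC_ball_moebius_zero_ofReal {a r : ℝ} (ha0 : 0 ≤ a) (ha1 : a < 1)
    (hr0 : 0 ≤ r) (hr1 : r ≤ 1) :
    triangularRatioC (ball 0 1) ((0 + a) / (1 + a * 0)) ((r + a) / (1 + a * r)) =
      (1 + a) * (2 - r) / (2 - (1 - a) * r) * triangularRatioC (ball 0 1) 0 r := by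
  have hden : 0 < 1 + a * r := by positivity
  have hdiff : (r + a) / (1 + a * r) - a = r * (1 - a ^ 2) / (1 + a * r) := by
    field_simp
    ring
  have hle : a ≤ (r + a) / (1 + a * r) := by
    rw [← sub_nonneg, hdiff]
    exact div_nonneg (mul_nonneg hr0 (by nlinarith)) hden.le
  have hle_one : (r + a) / (1 + a * r) ≤ 1 := by
    rw [div_le_one hden]
    nlinarith
  rw [mul_zero, add_zero, zero_add, div_one, moebius_ofReal,
    triangularRatioC_ball_ofReal ha0 hle hle_one,
    triangularRatioC_ball_zero_ofReal hr0 hr1]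
  have hgap : 2 - a - (r + a) / (1 + a * r) = (1 - a) * (2 - (1 - a) * r) / (1 + a * r) := by
    field_simp
    ring
  rw [hdiff, hgap]
  have : 1 - a ≠ 0 := by linarith
  have : 2 - r ≠ 0 := by linarith
  have : 2 - (1 - a) * r ≠ 0 := by nlinarith
  field_simp
  ring

theorem tendsto_moebius_expansion (a : ℝ) :
    Tendsto (fun r : ℝ => (1 + a) * (2 - r) / (2 - (1 - a) * r)) (𝓝 0) (𝓝 (1 + a)) := by
  have : ContinuousAt (fun r : ℝ => (1 + a) * (2 - r) / (2 - (1 - a) * r)) 0 :=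
    ContinuousAt.div (by fun_prop) (by fun_prop) (by norm_num)
  simpa using this.tendsto

/-- For `a ∈ (0,1)` and the Möbius self-map `h(z) = (z+a)/(1+az)` of the unit disk 𝔻
(with `h(0) = a`): for every `ε > 0` there are distinct `x, y ∈ 𝔻` with
`s_𝔻(h x, h y) > (1 + a - ε) s_𝔻(x, y)`.  Hence
`L(a) = sup s_𝔻(g x, g y)/s_𝔻(x,y)` over Möbius self-maps `g` of 𝔻 with `|g 0| = a`
satisfies `L(a) ≥ 1 + a`. -/
theorem s_disk_moebius_expansion_ge_one_add_a (a : ℝ) (ha0 : 0 < a) (ha1 : a < 1) :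
    ∀ ε : ℝ, 0 < ε → ∃ x y : ℂ, x ∈ Metric.ball (0 : ℂ) 1 ∧ y ∈ Metric.ball (0 : ℂ) 1 ∧
      x ≠ y ∧
      triangularRatioC (Metric.ball (0 : ℂ) 1)
          ((x + (a : ℂ)) / (1 + (a : ℂ) * x)) ((y + (a : ℂ)) / (1 + (a : ℂ) * y)) >
        (1 + a - ε) * triangularRatioC (Metric.ball (0 : ℂ) 1) x y := by
  intro ε hε
  have hnear : ∀ᶠ r in 𝓝 0, 1 + a - ε < (1 + a) * (2 - r) / (2 - (1 - a) * r) :=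
    (tendsto_moebius_expansion a).eventually (lt_mem_nhds (by linarith))
  obtain ⟨r, hexpand, hr0, hr1⟩ :=
    ((hnear.filter_mono nhdsWithin_le_nhds).and (Ioo_mem_nhdsGT one_pos)).exists
  have hr_ball : (r : ℂ) ∈ ball (0 : ℂ) 1 := by
    rwa [mem_ball_zero_iff, Complex.norm_real, Real.norm_of_nonneg hr0.le]
  refine ⟨0, r, mem_ball_self one_pos, hr_ball, by exact_mod_cast hr0.ne, ?_⟩
  rw [triangularRatioC_ball_moebius_zero_ofReal ha0.le ha1 hr0.le hr1.le]
  have hpos : 0 < triangularRatioC (ball 0 1) 0 r := by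
    rw [triangularRatioC_ball_zero_ofReal hr0.le hr1.le]
    exact div_pos (by linarith) (by linarith)
  exact mul_lt_mul_of_pos_right hexpand hpos
end

section
/- Let 0 < b ≤ a be real numbers. Then the function f(x) = log(1 + a·x)/log(1 + b·x) is decreasing on (0, ∞). -/
/-!
Writing `L c = log (1 + c x)`, the derivative of `L a / L b` has the sign of
`a (1 + b x) L b - b (1 + a x) L a`, which after multiplying by `x` compares
`(1 + t) log (1 + t) / t` at `t = b x` and `t = a x`. That quotient is the slope of the convex
function `s ↦ s log s` between `1` and `1 + t`, hence nondecreasing in `t`.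
-/

open Real Set

theorem monotoneOn_one_add_mul_log_one_add_div :
    MonotoneOn (fun t : ℝ => (1 + t) * log (1 + t) / t) (Ioi 0) := by
  intro u (hu : 0 < u) v (hv : 0 < v) huv
  have hslope := convexOn_mul_log.secant_mono (a := 1) (x := 1 + u) (y := 1 + v)
    (by simp) (by simp; linarith) (by simp; linarith) (by simp; linarith) (by simp; linarith)
    (by linarith)
  simpa using hslope

theorem hasDerivAt_log_one_add_mul {c x : ℝ} (h : 1 + c * x ≠ 0) :
    HasDerivAt (fun x => log (1 + c * x)) (c / (1 + c * x)) x := by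
  simpa [div_eq_inv_mul] using
    (((hasDerivAt_id x).const_mul c).const_add 1).log h

theorem div_one_add_mul_mul_log_le {a b x : ℝ} (hb : 0 < b) (hba : b ≤ a) (hx : 0 < x) :
    a / (1 + a * x) * log (1 + b * x) ≤ log (1 + a * x) * (b / (1 + b * x)) := by
  have ha : 0 < a := hb.trans_le hba
  have hslope := monotoneOn_one_add_mul_log_one_add_div (mul_pos hb hx) (mul_pos ha hx)
    (mul_le_mul_of_nonneg_right hba hx.le)
  dsimp only at hslope
  rw [div_le_div_iff₀ (by positivity) (by positivity)] at hslope
  rw [div_mul_eq_mul_div, mul_div_assoc', div_le_div_iff₀ (by positivity) (by positivity)]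
  nlinarith

/-- For `0 < b ≤ a`, the function `x ↦ log(1 + a x) / log(1 + b x)` is decreasing
on `(0, ∞)`. -/
theorem log_ratio_antitoneOn (a b : ℝ) (hb : 0 < b) (hba : b ≤ a) :
    AntitoneOn (fun x : ℝ => Real.log (1 + a * x) / Real.log (1 + b * x))
      (Set.Ioi (0 : ℝ)) := by
  have ha : 0 < a := hb.trans_le hba
  have hderiv : ∀ x ∈ Ioi (0 : ℝ),
      HasDerivAt (fun x => log (1 + a * x) / log (1 + b * x))
        ((a / (1 + a * x) * log (1 + b * x) - log (1 + a * x) * (b / (1 + b * x)))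
          / log (1 + b * x) ^ 2) x := fun x (hx : 0 < x) =>
    (hasDerivAt_log_one_add_mul (by positivity)).div
      (hasDerivAt_log_one_add_mul (by positivity)) (log_pos (by simp; positivity)).ne'
  refine antitoneOn_of_hasDerivWithinAt_nonpos (convex_Ioi 0)
    (fun x hx => (hderiv x hx).continuousAt.continuousWithinAt)
    (fun x hx => (hderiv x (interior_subset hx)).hasDerivWithinAt) fun x hx => ?_
  rw [interior_Ioi] at hx
  exact div_nonpos_of_nonpos_of_nonneg
    (sub_nonpos.mpr (div_one_add_mul_mul_log_le hb hba hx)) (sq_nonneg _)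
end

section
/- Let t ∈ (0,1) and let x, y ∈ 𝔹ⁿ with |x| < t and |y| < t, where n ≥ 1 and e₁ is the first standard unit vector. Then: (i) j_{𝔹ⁿ}(x,y) ≤ ((1+t)/(1−t)) · j_{ℝⁿ∖{e₁}}(x,y); (ii) p_{𝔹ⁿ}(x,y) ≤ √((2t²+2t+1)/(t²−2t+1)) · p_{ℝⁿ∖{e₁}}(x,y); (iii) s_{𝔹ⁿ}(x,y) ≤ ((1+t)/(1−t)) · s_{ℝⁿ∖{e₁}}(x,y). -/
open Metric Set

lemma frontier_punctured {n : ℕ} (e : EuclideanSpace ℝ (Fin (n + 1))) :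
    frontier ({e}ᶜ : Set (EuclideanSpace ℝ (Fin (n + 1)))) = {e} := by
  rw [frontier_compl, frontier, closure_singleton, interior_singleton, diff_empty]

lemma distBd_punctured {n : ℕ} (e w : EuclideanSpace ℝ (Fin (n + 1))) :
    distBd ({e}ᶜ) w = dist w e := by
  rw [distBd, frontier_punctured, Metric.infDist_singleton]

lemma distBd_ball_ge {n : ℕ} (w : EuclideanSpace ℝ (Fin (n + 1))) :
    1 - ‖w‖ ≤ distBd (Metric.ball (0 : EuclideanSpace ℝ (Fin (n + 1))) 1) w := by
  rw [distBd, frontier_ball 0 one_ne_zero]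
  by_contra h
  push_neg at h
  obtain ⟨z, hz, hlt⟩ := (Metric.infDist_lt_iff
    (NormedSpace.sphere_nonempty.mpr zero_le_one)).mp h
  have hz1 : dist z 0 = 1 := mem_sphere.mp hz
  have := dist_triangle z w 0
  rw [dist_comm z w] at this
  simp only [dist_zero_right] at this hz1
  linarith

set_option maxHeartbeats 1600000 in
/-- For `t ∈ (0,1)` and `x, y ∈ 𝔹ⁿ` with `|x|, |y| < t` (n ≥ 1), with `e₁` the first
standard unit vector:
(i)  `j_{𝔹ⁿ}(x,y) ≤ ((1+t)/(1-t)) j_{ℝⁿ∖{e₁}}(x,y)`;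
(ii) `p_{𝔹ⁿ}(x,y) ≤ √((2t²+2t+1)/(t²-2t+1)) p_{ℝⁿ∖{e₁}}(x,y)`;
(iii) `s_{𝔹ⁿ}(x,y) ≤ ((1+t)/(1-t)) s_{ℝⁿ∖{e₁}}(x,y)`. -/
theorem ball_vs_punctured_comparison {n : ℕ} (t : ℝ) (ht0 : 0 < t) (ht1 : t < 1)
    (x y : EuclideanSpace ℝ (Fin (n + 1))) (hx : ‖x‖ < t) (hy : ‖y‖ < t) :
    distRatio (Metric.ball (0 : EuclideanSpace ℝ (Fin (n + 1))) 1) x y ≤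
        ((1 + t) / (1 - t)) *
          distRatio ({EuclideanSpace.single (0 : Fin (n + 1)) (1 : ℝ)}ᶜ) x y ∧
      pMetric (Metric.ball (0 : EuclideanSpace ℝ (Fin (n + 1))) 1) x y ≤
        Real.sqrt ((2 * t ^ 2 + 2 * t + 1) / (t ^ 2 - 2 * t + 1)) *
          pMetric ({EuclideanSpace.single (0 : Fin (n + 1)) (1 : ℝ)}ᶜ) x y ∧
      triangularRatio (Metric.ball (0 : EuclideanSpace ℝ (Fin (n + 1))) 1) x y ≤
        ((1 + t) / (1 - t)) *
          triangularRatio ({EuclideanSpace.single (0 : Fin (n + 1)) (1 : ℝ)}ᶜ) x y := by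
  set e₁ : EuclideanSpace ℝ (Fin (n + 1)) := EuclideanSpace.single (0 : Fin (n + 1)) (1 : ℝ)
    with he₁def
  have hne : ‖e₁‖ = 1 := by simp [he₁def, EuclideanSpace.norm_single]
  set C : ℝ := (1 + t) / (1 - t) with hCdef
  have ht1' : 0 < 1 - t := by linarith
  have hC1 : (1 : ℝ) ≤ C := (le_div_iff₀ ht1').mpr (by linarith)
  have hC0 : 0 < C := lt_of_lt_of_le one_pos hC1
  have hCt : C * (1 - t) = 1 + t := div_mul_cancel₀ _ ht1'.ne'
  set d : ℝ := dist x y with hddef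
  have hd0 : 0 ≤ d := dist_nonneg
  -- bounds on distances to e₁
  have hdx1 : 1 - ‖x‖ ≤ dist x e₁ := by
    have h := norm_sub_norm_le e₁ x
    rw [norm_sub_rev] at h
    rw [dist_eq_norm]; linarith
  have hdy1 : 1 - ‖y‖ ≤ dist y e₁ := by
    have h := norm_sub_norm_le e₁ y
    rw [norm_sub_rev] at h
    rw [dist_eq_norm]; linarith
  have hdx2 : dist x e₁ ≤ 1 + ‖x‖ := by
    have h := norm_sub_le x e₁
    rw [dist_eq_norm]; linarith
  have hdy2 : dist y e₁ ≤ 1 + ‖y‖ := by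
    have h := norm_sub_le y e₁
    rw [dist_eq_norm]; linarith
  have hnx0 : 0 ≤ ‖x‖ := norm_nonneg _
  have hny0 : 0 ≤ ‖y‖ := norm_nonneg _
  have hdx0 : 0 < dist x e₁ := by linarith
  have hdy0 : 0 < dist y e₁ := by linarith
  -- bounds on distances to the sphere
  set A : ℝ := distBd (Metric.ball (0 : EuclideanSpace ℝ (Fin (n + 1))) 1) x with hAdef
  set B : ℝ := distBd (Metric.ball (0 : EuclideanSpace ℝ (Fin (n + 1))) 1) y with hBdef
  have hA : 1 - ‖x‖ ≤ A := distBd_ball_ge x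
  have hB : 1 - ‖y‖ ≤ B := distBd_ball_ge y
  have hA0 : 0 < A := by linarith
  have hB0 : 0 < B := by linarith
  refine ⟨?_, ?_, ?_⟩
  · -- distRatio part
    rw [distRatio, distRatio, distBd_punctured, distBd_punctured, ← hAdef, ← hBdef, ← hddef]
    set m₁ : ℝ := min A B with hm₁
    set m₂ : ℝ := min (dist x e₁) (dist y e₁) with hm₂
    have hm₁0 : 0 < m₁ := lt_min hA0 hB0
    have hm₂0 : 0 < m₂ := lt_min hdx0 hdy0
    have hkey : m₂ ≤ C * m₁ := by
      have hxx : dist x e₁ ≤ C * A := by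
        have : 1 + ‖x‖ ≤ C * (1 - ‖x‖) := by
          rw [hCdef, div_mul_eq_mul_div, le_div_iff₀ ht1']
          nlinarith
        have h2 : C * (1 - ‖x‖) ≤ C * A := by nlinarith
        linarith
      have hyy : dist y e₁ ≤ C * B := by
        have : 1 + ‖y‖ ≤ C * (1 - ‖y‖) := by
          rw [hCdef, div_mul_eq_mul_div, le_div_iff₀ ht1']
          nlinarith
        have h2 : C * (1 - ‖y‖) ≤ C * B := by nlinarith
        linarith
      rcases le_total A B with h | h
      · rw [hm₁, min_eq_left h]
        exact le_trans (min_le_left _ _) hxx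
      · rw [hm₁, min_eq_right h]
        exact le_trans (min_le_right _ _) hyy
    have hdm₂0 : 0 ≤ d / m₂ := div_nonneg hd0 hm₂0.le
    have hdm₁0 : 0 ≤ d / m₁ := div_nonneg hd0 hm₁0.le
    have hdiv : d / m₁ ≤ C * (d / m₂) := by
      rw [mul_div_assoc', div_le_div_iff₀ hm₁0 hm₂0]
      calc d * m₂ ≤ d * (C * m₁) := mul_le_mul_of_nonneg_left hkey hd0
        _ = C * d * m₁ := by ring
    have hBern : 1 + C * (d / m₂) ≤ (1 + d / m₂) ^ C :=
      one_add_mul_self_le_rpow_one_add (by linarith) hC1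
    have hlog := Real.log_le_log (by linarith)
      (le_trans (by linarith : 1 + d / m₁ ≤ 1 + C * (d / m₂)) hBern)
    rwa [Real.log_rpow (by linarith)] at hlog
  · -- pMetric part
    rw [pMetric, pMetric, distBd_punctured, distBd_punctured, ← hAdef, ← hBdef, ← hddef]
    have hXY : 0 < dist x e₁ * dist y e₁ := mul_pos hdx0 hdy0
    have hAB : 0 < A * B := mul_pos hA0 hB0
    set S : ℝ := d ^ 2 + 4 * A * B with hSdef
    set S' : ℝ := d ^ 2 + 4 * dist x e₁ * dist y e₁ with hS'def
    set Q : ℝ := (2 * t ^ 2 + 2 * t + 1) / (t ^ 2 - 2 * t + 1) with hQdef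
    have hden : (0 : ℝ) < t ^ 2 - 2 * t + 1 := by nlinarith
    have hQden : Q * (t ^ 2 - 2 * t + 1) = 2 * t ^ 2 + 2 * t + 1 :=
      div_mul_cancel₀ _ hden.ne'
    have hQ1 : (1 : ℝ) ≤ Q := (le_div_iff₀ hden).mpr (by nlinarith)
    have hQ0 : 0 < Q := lt_of_lt_of_le one_pos hQ1
    have hS0 : 0 < S := by rw [hSdef]; nlinarith [sq_nonneg d]
    have hS'0 : 0 < S' := by rw [hS'def]; nlinarith [sq_nonneg d]
    have hS'QS : S' ≤ Q * S := by
      have h1 : dist x e₁ * dist y e₁ ≤ (1 + t) * (1 + t) := by nlinarith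
      have h2 : (1 - t) * (1 - t) ≤ A * B := by nlinarith
      have h3 : Q * ((1 - t) * (1 - t)) ≤ Q * (A * B) :=
        mul_le_mul_of_nonneg_left h2 hQ0.le
      have h4 : Q * ((1 - t) * (1 - t)) = 2 * t ^ 2 + 2 * t + 1 := by
        rw [show (1 - t) * (1 - t) = t ^ 2 - 2 * t + 1 by ring, hQden]
      have h5 : 0 ≤ (Q - 1) * d ^ 2 := mul_nonneg (by linarith) (sq_nonneg d)
      rw [hSdef, hS'def]
      nlinarith
    have hsq : Real.sqrt S' ≤ Real.sqrt Q * Real.sqrt S := by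
      rw [← Real.sqrt_mul hQ0.le]
      exact Real.sqrt_le_sqrt hS'QS
    have hsS : 0 < Real.sqrt S := Real.sqrt_pos.mpr hS0
    have hsS' : 0 < Real.sqrt S' := Real.sqrt_pos.mpr hS'0
    calc d / Real.sqrt S ≤ Real.sqrt Q * d / Real.sqrt S' := by
          rw [div_le_div_iff₀ hsS hsS']
          nlinarith [mul_le_mul_of_nonneg_left hsq hd0]
      _ = Real.sqrt Q * (d / Real.sqrt S') := by ring
  · -- triangularRatio part
    have hR : triangularRatio ({e₁}ᶜ) x y = d / (dist x e₁ + dist e₁ y) := by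
      rw [triangularRatio]
      rw [show frontier ({e₁}ᶜ : Set (EuclideanSpace ℝ (Fin (n + 1)))) = {e₁} from
        frontier_punctured e₁]
      rw [ciSup_unique]
      rfl
    rw [hR, triangularRatio, frontier_ball 0 one_ne_zero]
    have hsne : (Metric.sphere (0 : EuclideanSpace ℝ (Fin (n + 1))) 1).Nonempty :=
      NormedSpace.sphere_nonempty.mpr zero_le_one
    haveI := hsne.to_subtype
    apply ciSup_le
    intro z
    have hz1 : dist z.1 0 = 1 := mem_sphere.mp z.2
    have hxz : 1 - ‖x‖ ≤ dist x z.1 := by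
      have h := dist_triangle z.1 x 0
      rw [dist_comm z.1 x] at h
      simp only [dist_zero_right] at h hz1
      linarith
    have hyz : 1 - ‖y‖ ≤ dist z.1 y := by
      have h := dist_triangle z.1 y 0
      rw [dist_comm z.1 y] at h
      simp only [dist_zero_right] at h hz1
      rw [dist_comm z.1 y]
      linarith
    have hey : dist e₁ y = dist y e₁ := dist_comm _ _
    set p : ℝ := dist x z.1 + dist z.1 y with hp
    set q : ℝ := dist x e₁ + dist e₁ y with hq
    have hp0 : 0 < p := by rw [hp]; linarith
    have hq0 : 0 < q := by rw [hq, hey]; linarith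
    have hpge : 2 * (1 - t) ≤ p := by rw [hp]; linarith
    have hqle : q ≤ 2 * (1 + t) := by rw [hq, hey]; linarith
    rw [mul_div_assoc', div_le_div_iff₀ hp0 hq0]
    nlinarith [mul_le_mul_of_nonneg_left hqle hd0,
      mul_le_mul_of_nonneg_left hpge (mul_nonneg hC0.le hd0)]
end

section
/- Let G ⊊ ℝⁿ be a proper subdomain, x ∈ G, t ∈ (0,1), and set G' = G ∖ {x}. Then for all y, z ∈ G ∖ 𝔹ⁿ(x, t·d_G(x)): (i) j_{G'}(y,z) ≤ (2/t) · j_G(y,z); (ii) p_{G'}(y,z) ≤ ((t+1)/t) · p_G(y,z); (iii) s_{G'}(y,z) ≤ (1 + 1/t) · s_G(y,z). -/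
open Metric Set

set_option maxHeartbeats 2000000 in
/-- For a proper subdomain `G ⊊ ℝⁿ`, `x ∈ G`, `t ∈ (0,1)`, `G' = G ∖ {x}`, and all
`y, z ∈ G ∖ 𝔹ⁿ(x, t d_G(x))`:
(i)  `j_{G'}(y,z) ≤ (2/t) j_G(y,z)`;
(ii) `p_{G'}(y,z) ≤ ((t+1)/t) p_G(y,z)`;
(iii) `s_{G'}(y,z) ≤ (1 + 1/t) s_G(y,z)`. -/
theorem punctured_domain_comparison {n : ℕ}
    (G : Set (EuclideanSpace ℝ (Fin n)))
    (hGopen : IsOpen G) (hGconn : IsConnected G) (hGproper : G ≠ univ)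
    (x : EuclideanSpace ℝ (Fin n)) (hx : x ∈ G)
    (t : ℝ) (ht0 : 0 < t) (ht1 : t < 1)
    (y z : EuclideanSpace ℝ (Fin n))
    (hy : y ∈ G \ Metric.ball x (t * Metric.infDist x (frontier G)))
    (hz : z ∈ G \ Metric.ball x (t * Metric.infDist x (frontier G))) :
    distRatio (G \ {x}) y z ≤ (2 / t) * distRatio G y z ∧
      pMetric (G \ {x}) y z ≤ ((t + 1) / t) * pMetric G y z ∧
      triangularRatio (G \ {x}) y z ≤ (1 + 1 / t) * triangularRatio G y z := by
  have hyG : y ∈ G := hy.1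
  have hzG : z ∈ G := hz.1
  set F := frontier G with hFdef
  have ht1' : (0:ℝ) < t + 1 := by linarith
  have hFne : F.Nonempty := nonempty_frontier_iff.mpr ⟨⟨x, hx⟩, hGproper⟩
  have hFclosed : IsClosed F := isClosed_frontier
  have hmemF : ∀ w, w ∈ G → w ∉ F := fun w hw hwF =>
    (disjoint_frontier_iff_isOpen.mpr hGopen).le_bot ⟨hwF, hw⟩
  have hdpos : ∀ w, w ∈ G → 0 < infDist w F := fun w hw =>
    (hFclosed.notMem_iff_infDist_pos hFne).mp (hmemF w hw)
  have hdxpos : 0 < infDist x F := hdpos x hx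
  have hyx : t * infDist x F ≤ dist y x := not_lt.mp (fun h => hy.2 (mem_ball.mpr h))
  have hzx : t * infDist x F ≤ dist z x := not_lt.mp (fun h => hz.2 (mem_ball.mpr h))
  have hc0 : 0 < t / (t + 1) := by positivity
  -- frontier inclusions
  have hsub : frontier (G \ {x}) ⊆ F ∪ {x} := by
    rw [diff_eq]
    refine (frontier_inter_subset _ _).trans ?_
    rintro w (h | h)
    · exact Or.inl h.1
    · right
      have h2 := h.2
      rw [frontier_compl] at h2
      exact isClosed_singleton.frontier_subset h2
  have hsup : F ⊆ frontier (G \ {x}) := by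
    intro w hwF
    have hwnotG : w ∉ G := fun h => hmemF w h hwF
    have hwx : w ≠ x := fun h => hwnotG (h ▸ hx)
    simp only [frontier, mem_diff]
    constructor
    · have h1 : w ∈ ({x}ᶜ : Set _) ∩ closure G := ⟨hwx, hwF.1⟩
      have h2 := (isOpen_compl_singleton :
        IsOpen ({x}ᶜ : Set (EuclideanSpace ℝ (Fin n)))).inter_closure h1
      rwa [inter_comm, ← diff_eq] at h2
    · exact fun hmem => hwnotG (interior_subset hmem).1
  have hF'ne : (frontier (G \ {x})).Nonempty := hFne.mono hsup
  -- lower bound on punctured distance to boundary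
  have hd'low : ∀ w, w ∈ G → t * infDist x F ≤ dist w x →
      t / (t + 1) * infDist w F ≤ infDist w (frontier (G \ {x})) := by
    intro w hwG hwx
    have hdw : infDist w F ≤ infDist x F + dist w x := infDist_le_infDist_add_dist
    have h1 : infDist x F ≤ dist w x / t := by
      rw [le_div_iff₀ ht0]; nlinarith
    have h2 : t / (t + 1) * infDist w F ≤ dist w x := by
      have h3 : infDist w F ≤ (t + 1) / t * dist w x := by
        calc infDist w F ≤ dist w x / t + dist w x := by linarith
          _ = (t + 1) / t * dist w x := by field_simp; ring
      calc t / (t + 1) * infDist w F ≤ t / (t + 1) * ((t + 1) / t * dist w x) :=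
            mul_le_mul_of_nonneg_left h3 (by positivity)
        _ = dist w x := by field_simp
    by_contra hcon
    push_neg at hcon
    obtain ⟨p, hp, hplt⟩ := (infDist_lt_iff hF'ne).mp hcon
    rcases hsub hp with hpF | hpx
    · have hle1 := infDist_le_dist_of_mem (x := w) hpF
      have hc : t / (t + 1) ≤ 1 := by
        rw [div_le_one (by linarith)]; linarith
      have hle : t / (t + 1) * infDist w F ≤ infDist w F := by
        calc t / (t + 1) * infDist w F ≤ 1 * infDist w F :=
              mul_le_mul_of_nonneg_right hc infDist_nonneg
          _ = infDist w F := one_mul _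
      linarith
    · rw [mem_singleton_iff] at hpx
      rw [hpx] at hplt
      linarith
  have hdy' := hd'low y hyG hyx
  have hdz' := hd'low z hzG hzx
  have hqn : (0:ℝ) ≤ dist y z := dist_nonneg
  -- Part (i)
  have part1 : distRatio (G \ {x}) y z ≤ (2 / t) * distRatio G y z := by
    unfold distRatio distBd
    rw [← hFdef]
    have hmpos : 0 < min (infDist y F) (infDist z F) := lt_min (hdpos y hyG) (hdpos z hzG)
    set m := min (infDist y F) (infDist z F) with hm
    set m' := min (infDist y (frontier (G \ {x}))) (infDist z (frontier (G \ {x}))) with hm'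
    have hm'ge : t / (t + 1) * m ≤ m' := by
      refine le_min (le_trans ?_ hdy') (le_trans ?_ hdz')
      · exact mul_le_mul_of_nonneg_left (min_le_left _ _) hc0.le
      · exact mul_le_mul_of_nonneg_left (min_le_right _ _) hc0.le
    have hm'pos : 0 < m' := lt_of_lt_of_le (by positivity) hm'ge
    set q := dist y z with hq
    have hu : 0 ≤ q / m := div_nonneg hqn hmpos.le
    have hu' : 0 ≤ q / m' := div_nonneg hqn hm'pos.le
    have key : q / m' ≤ (t + 1) / t * (q / m) := by
      calc q / m' ≤ q / (t / (t + 1) * m) :=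
            div_le_div_of_nonneg_left hqn (by positivity) hm'ge
        _ = (t + 1) / t * (q / m) := by field_simp
    have halpha : (1:ℝ) ≤ (t + 1) / t := by rw [le_div_iff₀ ht0]; linarith
    have hmul : 0 ≤ (t + 1) / t * (q / m) := by positivity
    have hber : 1 + (t + 1) / t * (q / m) ≤ (1 + q / m) ^ ((t + 1) / t) :=
      one_add_mul_self_le_rpow_one_add (by linarith) halpha
    calc Real.log (1 + q / m') ≤ Real.log (1 + (t + 1) / t * (q / m)) :=
          Real.log_le_log (by linarith) (by linarith)
      _ ≤ Real.log ((1 + q / m) ^ ((t + 1) / t)) :=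
          Real.log_le_log (by linarith) hber
      _ = (t + 1) / t * Real.log (1 + q / m) := Real.log_rpow (by linarith) _
      _ ≤ 2 / t * Real.log (1 + q / m) := by
          have hlog : 0 ≤ Real.log (1 + q / m) := Real.log_nonneg (by linarith)
          have hfr : (t + 1) / t ≤ 2 / t := by
            rw [div_le_div_iff₀ ht0 ht0]; nlinarith
          exact mul_le_mul_of_nonneg_right hfr hlog
  -- Part (ii)
  have part2 : pMetric (G \ {x}) y z ≤ ((t + 1) / t) * pMetric G y z := by
    unfold pMetric distBd
    rw [← hFdef]
    set q := dist y z with hq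
    set dy := infDist y F with hdy0
    set dz := infDist z F with hdz0
    set dy' := infDist y (frontier (G \ {x})) with hdy0'
    set dz' := infDist z (frontier (G \ {x})) with hdz0'
    have hdy := hdpos y hyG
    have hdz := hdpos z hzG
    have hd'ypos : 0 < dy' := lt_of_lt_of_le (by positivity) hdy'
    have hd'zpos : 0 < dz' := lt_of_lt_of_le (by positivity) hdz'
    have hApos : 0 < Real.sqrt (q ^ 2 + 4 * dy * dz) :=
      Real.sqrt_pos.mpr (by positivity)
    have hB : t / (t + 1) * Real.sqrt (q ^ 2 + 4 * dy * dz)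
        ≤ Real.sqrt (q ^ 2 + 4 * dy' * dz') := by
      rw [show t / (t + 1) * Real.sqrt (q ^ 2 + 4 * dy * dz)
          = Real.sqrt ((t / (t + 1)) ^ 2 * (q ^ 2 + 4 * dy * dz)) by
        rw [Real.sqrt_mul (sq_nonneg _), Real.sqrt_sq hc0.le]]
      apply Real.sqrt_le_sqrt
      have hmm : (t / (t + 1) * dy) * (t / (t + 1) * dz) ≤ dy' * dz' :=
        mul_le_mul hdy' hdz' (by positivity) infDist_nonneg
      have hc : t / (t + 1) ≤ 1 := by rw [div_le_one ht1']; linarith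
      have hc2 : (t / (t + 1)) ^ 2 ≤ 1 := by nlinarith
      nlinarith [sq_nonneg q, hmm, hc2]
    have hBpos : 0 < Real.sqrt (q ^ 2 + 4 * dy' * dz') :=
      lt_of_lt_of_le (by positivity) hB
    calc q / Real.sqrt (q ^ 2 + 4 * dy' * dz')
        ≤ q / (t / (t + 1) * Real.sqrt (q ^ 2 + 4 * dy * dz)) :=
          div_le_div_of_nonneg_left hqn (by positivity) hB
      _ = (t + 1) / t * (q / Real.sqrt (q ^ 2 + 4 * dy * dz)) := by
          rw [div_mul_eq_div_div_swap, div_div_eq_mul_div]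
          ring
  -- Part (iii)
  have part3 : triangularRatio (G \ {x}) y z ≤ (1 + 1 / t) * triangularRatio G y z := by
    obtain ⟨w₀, hw₀F, hw₀d⟩ := hFclosed.exists_infDist_eq_dist hFne x
    haveI : Nonempty ↥(frontier (G \ {x})) := hF'ne.to_subtype
    haveI : Nonempty ↥F := hFne.to_subtype
    have hbdd : BddAbove (range fun w : F => dist y z / (dist y w.1 + dist w.1 z)) := by
      refine ⟨1, ?_⟩
      rintro r ⟨w, rfl⟩
      exact div_le_one_of_le₀ (dist_triangle y w.1 z) (by positivity)
    have hterm_le : ∀ w : F, dist y z / (dist y w.1 + dist w.1 z) ≤ triangularRatio G y z :=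
      fun w => le_ciSup hbdd w
    have hs0 : 0 ≤ triangularRatio G y z :=
      le_trans (by positivity) (hterm_le ⟨w₀, hw₀F⟩)
    have hcoef1 : (1:ℝ) ≤ 1 + 1 / t := by
      have : 0 < 1 / t := by positivity
      linarith
    unfold triangularRatio
    apply ciSup_le
    intro w
    rcases hsub w.2 with hwF | hwx
    · exact le_trans (hterm_le ⟨w.1, hwF⟩) (le_mul_of_one_le_left hs0 hcoef1)
    · rw [mem_singleton_iff] at hwx
      rw [hwx]
      have hyw₀ : (0:ℝ) < dist y w₀ :=
        dist_pos.mpr (fun h => hmemF y hyG (h ▸ hw₀F))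
      have hyxpos : (0:ℝ) < dist y x := lt_of_lt_of_le (by positivity) hyx
      have hDx : 0 < dist y x + dist x z := by
        have := dist_nonneg (x := x) (y := z); linarith
      have hD0 : 0 < dist y w₀ + dist w₀ z := by
        have := dist_nonneg (x := w₀) (y := z); linarith
      have h2dx : 2 * infDist x F ≤ (dist y x + dist x z) / t := by
        rw [le_div_iff₀ ht0, dist_comm x z]
        nlinarith
      have hD : dist y w₀ + dist w₀ z ≤ (1 + 1 / t) * (dist y x + dist x z) := by
        have t1 := dist_triangle y x w₀
        have t2 := dist_triangle w₀ x z
        rw [dist_comm w₀ x] at t2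
        have e : dist x w₀ = infDist x F := hw₀d.symm
        have h4 : dist y w₀ + dist w₀ z ≤ dist y x + dist x z + 2 * infDist x F := by
          rw [e] at t1 t2; linarith
        calc dist y w₀ + dist w₀ z ≤ dist y x + dist x z + (dist y x + dist x z) / t := by
              linarith
          _ = (1 + 1 / t) * (dist y x + dist x z) := by field_simp
      have keyx : dist y z / (dist y x + dist x z)
          ≤ (1 + 1 / t) * (dist y z / (dist y w₀ + dist w₀ z)) := by
        rw [mul_div_assoc', div_le_div_iff₀ hDx hD0]
        nlinarith [mul_le_mul_of_nonneg_left hD hqn]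
      exact le_trans keyx
        (mul_le_mul_of_nonneg_left (hterm_le ⟨w₀, hw₀F⟩) (by positivity))
  exact ⟨part1, part2, part3⟩
end
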